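/- arXiv:1409.1676 — 4 statements merged into one kernel-verified Lean document; each statement's English description precedes it below -/
import Mathlib

section
/- Under the Case 1 configuration of the banner-in-square setting (v3v5 ∈ E, and vertices a, b, c, d with av2, av3, bv3, bv4, cv1, cv2, ac, dv1, dv4, bd, cd, bc, ad, ab all edges of G), none of the vertices v2, v4, a, b, c, d belongs to D. -/
set_option maxRecDepth 8000

/-- The square of a graph `G`: two distinct vertices are adjacent in `G²` iff
their distance in `G` is 1 or 2. -/
def SimpleGraph.square {V : Type*} (G : SimpleGraph V) : SimpleGraph V where
  Adj u v := u ≠ v ∧ G.edist u v ≤ 2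
  symm := ⟨fun u v ⟨h, hd⟩ => ⟨h.symm, by rwa [SimpleGraph.edist_comm]⟩⟩
  loopless := ⟨fun u ⟨h, _⟩ => h rfl⟩

/-- `D` is an efficient dominating set of `G`: `D` is an independent set and
every vertex outside `D` has exactly one neighbor in `D`. -/
def SimpleGraph.IsEfficientDominatingSet {V : Type*} (G : SimpleGraph V) (D : Set V) : Prop :=
  (∀ u ∈ D, ∀ v ∈ D, ¬ G.Adj u v) ∧ ∀ v ∉ D, ∃! u, u ∈ D ∧ G.Adj v u

/-- The banner: a chordless 4-cycle 0-1-2-3-0 together with the vertex 4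
adjacent to exactly one vertex (namely 0) of the cycle. -/
def banner : SimpleGraph (Fin 5) :=
  SimpleGraph.fromEdgeSet {s(0, 1), s(1, 2), s(2, 3), s(3, 0), s(0, 4)}

/-- `G` is `H`-free: no induced subgraph of `G` is isomorphic to `H`. -/
def IsInducedFree {W V : Type*} (H : SimpleGraph W) (G : SimpleGraph V) : Prop :=
  IsEmpty (H ↪g G)

lemma adj_edist_le_one {V : Type*} {G : SimpleGraph V} {u v : V} (h : G.Adj u v) :
    G.edist u v ≤ 1 := by
  simpa using SimpleGraph.edist_le h.toWalk

set_option maxHeartbeats 1000000 in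
lemma no_banner {V : Type*} {G : SimpleGraph V} (hB : IsInducedFree banner G)
    (x0 x1 x2 x3 x4 : V)
    (h01 : G.Adj x0 x1) (h12 : G.Adj x1 x2) (h23 : G.Adj x2 x3) (h30 : G.Adj x3 x0)
    (h04 : G.Adj x0 x4)
    (n02 : ¬G.Adj x0 x2) (n13 : ¬G.Adj x1 x3) (n14 : ¬G.Adj x1 x4)
    (n24 : ¬G.Adj x2 x4) (n34 : ¬G.Adj x3 x4)
    (d02 : x0 ≠ x2) (d13 : x1 ≠ x3) (d14 : x1 ≠ x4) (d24 : x2 ≠ x4) (d34 : x3 ≠ x4) :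
    False := by
  apply hB.elim'
  have n20 : ¬G.Adj x2 x0 := fun h => n02 h.symm
  have n31 : ¬G.Adj x3 x1 := fun h => n13 h.symm
  have n41 : ¬G.Adj x4 x1 := fun h => n14 h.symm
  have n42 : ¬G.Adj x4 x2 := fun h => n24 h.symm
  have n43 : ¬G.Adj x4 x3 := fun h => n34 h.symm
  have h10 := h01.symm
  have h21 := h12.symm
  have h32 := h23.symm
  have h03 := h30.symm
  have h40 := h04.symm
  refine ⟨⟨fun i => [x0,x1,x2,x3,x4].get (Fin.cast (by norm_num) i), ?_⟩, ?_⟩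
  · intro i j hij
    fin_cases i <;> fin_cases j <;>
      first
        | rfl
        | exact absurd hij h01.ne | exact absurd hij h01.ne' | exact absurd hij h12.ne
        | exact absurd hij h12.ne' | exact absurd hij h23.ne | exact absurd hij h23.ne'
        | exact absurd hij h30.ne | exact absurd hij h30.ne' | exact absurd hij h04.ne
        | exact absurd hij h04.ne'
        | exact absurd hij d02 | exact absurd hij d02.symm | exact absurd hij d13
        | exact absurd hij d13.symm | exact absurd hij d14 | exact absurd hij d14.symm
        | exact absurd hij d24 | exact absurd hij d24.symm | exact absurd hij d34
        | exact absurd hij d34.symm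
  · intro i j
    fin_cases i <;> fin_cases j <;>
      first
        | exact iff_of_false (G.irrefl) (by simp [banner, SimpleGraph.fromEdgeSet_adj])
        | exact iff_of_true (by assumption) (by simp [banner, SimpleGraph.fromEdgeSet_adj])
        | exact iff_of_false (by assumption) (by simp [banner, SimpleGraph.fromEdgeSet_adj])

set_option maxHeartbeats 1000000 in
lemma no_p6 {V : Type*} {G : SimpleGraph V} (hP : IsInducedFree (SimpleGraph.pathGraph 6) G)
    (x0 x1 x2 x3 x4 x5 : V)
    (h01 : G.Adj x0 x1) (h12 : G.Adj x1 x2) (h23 : G.Adj x2 x3) (h34 : G.Adj x3 x4)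
    (h45 : G.Adj x4 x5)
    (n02 : ¬G.Adj x0 x2) (n03 : ¬G.Adj x0 x3) (n04 : ¬G.Adj x0 x4) (n05 : ¬G.Adj x0 x5)
    (n13 : ¬G.Adj x1 x3) (n14 : ¬G.Adj x1 x4) (n15 : ¬G.Adj x1 x5)
    (n24 : ¬G.Adj x2 x4) (n25 : ¬G.Adj x2 x5) (n35 : ¬G.Adj x3 x5)
    (d02 : x0 ≠ x2) (d03 : x0 ≠ x3) (d04 : x0 ≠ x4) (d05 : x0 ≠ x5)
    (d13 : x1 ≠ x3) (d14 : x1 ≠ x4) (d15 : x1 ≠ x5)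
    (d24 : x2 ≠ x4) (d25 : x2 ≠ x5) (d35 : x3 ≠ x5) : False := by
  apply hP.elim'
  have n20 : ¬G.Adj x2 x0 := fun h => n02 h.symm
  have n30 : ¬G.Adj x3 x0 := fun h => n03 h.symm
  have n40 : ¬G.Adj x4 x0 := fun h => n04 h.symm
  have n50 : ¬G.Adj x5 x0 := fun h => n05 h.symm
  have n31 : ¬G.Adj x3 x1 := fun h => n13 h.symm
  have n41 : ¬G.Adj x4 x1 := fun h => n14 h.symm
  have n51 : ¬G.Adj x5 x1 := fun h => n15 h.symm
  have n42 : ¬G.Adj x4 x2 := fun h => n24 h.symm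
  have n52 : ¬G.Adj x5 x2 := fun h => n25 h.symm
  have n53 : ¬G.Adj x5 x3 := fun h => n35 h.symm
  have h10 := h01.symm
  have h21 := h12.symm
  have h32 := h23.symm
  have h43 := h34.symm
  have h54 := h45.symm
  refine ⟨⟨fun i => [x0,x1,x2,x3,x4,x5].get (Fin.cast (by norm_num) i), ?_⟩, ?_⟩
  · intro i j hij
    fin_cases i <;> fin_cases j <;>
      first
        | rfl
        | exact absurd hij h01.ne | exact absurd hij h01.ne' | exact absurd hij h12.ne
        | exact absurd hij h12.ne' | exact absurd hij h23.ne | exact absurd hij h23.ne'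
        | exact absurd hij h34.ne | exact absurd hij h34.ne' | exact absurd hij h45.ne
        | exact absurd hij h45.ne'
        | exact absurd hij d02 | exact absurd hij d02.symm | exact absurd hij d03
        | exact absurd hij d03.symm | exact absurd hij d04 | exact absurd hij d04.symm
        | exact absurd hij d05 | exact absurd hij d05.symm | exact absurd hij d13
        | exact absurd hij d13.symm | exact absurd hij d14 | exact absurd hij d14.symm
        | exact absurd hij d15 | exact absurd hij d15.symm | exact absurd hij d24
        | exact absurd hij d24.symm | exact absurd hij d25 | exact absurd hij d25.symm
        | exact absurd hij d35 | exact absurd hij d35.symm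
  · intro i j
    fin_cases i <;> fin_cases j <;>
      first
        | exact iff_of_false (G.irrefl) (by rw [SimpleGraph.pathGraph_adj]; decide)
        | exact iff_of_true (by assumption) (by rw [SimpleGraph.pathGraph_adj]; decide)
        | exact iff_of_false (by assumption) (by rw [SimpleGraph.pathGraph_adj]; decide)

theorem banner_case1_vertices_notin_D {V : Type*} [Fintype V] (G : SimpleGraph V)
    (hP6 : IsInducedFree (SimpleGraph.pathGraph 6) G)
    (hBanner : IsInducedFree banner G)
    (D : Set V) (hD : G.IsEfficientDominatingSet D)
    (v1 v2 v3 v4 v5 : V)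
    (h12 : G.edist v1 v2 ≤ 2) (h23 : G.edist v2 v3 ≤ 2) (h34 : G.edist v3 v4 ≤ 2)
    (h41 : G.edist v4 v1 ≤ 2) (h35 : G.edist v3 v5 ≤ 2)
    (h13 : 3 ≤ G.edist v1 v3) (h15 : 3 ≤ G.edist v1 v5) (h24 : 3 ≤ G.edist v2 v4)
    (h25 : 3 ≤ G.edist v2 v5) (h45 : 3 ≤ G.edist v4 v5)
    (hv3v5 : G.Adj v3 v5)
    (a b c d : V)
    (hav2 : G.Adj a v2) (hav3 : G.Adj a v3) (hbv3 : G.Adj b v3) (hbv4 : G.Adj b v4)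
    (hcv1 : G.Adj c v1) (hcv2 : G.Adj c v2) (hac : G.Adj a c) (hdv1 : G.Adj d v1)
    (hdv4 : G.Adj d v4) (hbd : G.Adj b d) (hcd : G.Adj c d) (hbc : G.Adj b c)
    (had : G.Adj a d) (hab : G.Adj a b)
    : v2 ∉ D ∧ v4 ∉ D ∧ a ∉ D ∧ b ∉ D ∧ c ∉ D ∧ d ∉ D := by
  -- basic distance tools
  have key3 : ∀ {u w x : V}, 3 ≤ G.edist u w → G.Adj u x → G.Adj x w → False := by
    intro u w x h hx hw
    have t : G.edist u w ≤ 2 := by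
      calc G.edist u w ≤ G.edist u x + G.edist x w := SimpleGraph.edist_triangle
        _ ≤ 1 + 1 := add_le_add (adj_edist_le_one hx) (adj_edist_le_one hw)
        _ = 2 := by norm_num
    exact absurd (h.trans t) (by norm_num)
  have key1 : ∀ {u w : V}, 3 ≤ G.edist u w → ¬ G.Adj u w := fun h hadj =>
    absurd (h.trans (adj_edist_le_one hadj)) (by norm_num)
  have keyne : ∀ {u w : V}, 3 ≤ G.edist u w → u ≠ w := by
    intro u w h heq
    subst heq
    rw [SimpleGraph.edist_self] at h
    exact absurd h (by norm_num)
  -- forced non-adjacencies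
  have nAdj_v1v3 : ¬G.Adj v1 v3 := key1 h13
  have nAdj_v1v5 : ¬G.Adj v1 v5 := key1 h15
  have nAdj_v2v4 : ¬G.Adj v2 v4 := key1 h24
  have nAdj_v2v5 : ¬G.Adj v2 v5 := key1 h25
  have nAdj_v4v5 : ¬G.Adj v4 v5 := key1 h45
  have nAdj_v1a : ¬G.Adj v1 a := fun h => key3 h13 h hav3
  have nAdj_v1b : ¬G.Adj v1 b := fun h => key3 h13 h hbv3
  have nAdj_cv3 : ¬G.Adj c v3 := fun h => key3 h13 hcv1.symm h
  have nAdj_dv3 : ¬G.Adj d v3 := fun h => key3 h13 hdv1.symm h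
  have nAdj_v2b : ¬G.Adj v2 b := fun h => key3 h24 h hbv4
  have nAdj_v2d : ¬G.Adj v2 d := fun h => key3 h24 h hdv4
  have nAdj_av4 : ¬G.Adj a v4 := fun h => key3 h24 hav2.symm h
  have nAdj_cv4 : ¬G.Adj c v4 := fun h => key3 h24 hcv2.symm h
  have nAdj_av5 : ¬G.Adj a v5 := fun h => key3 h25 hav2.symm h
  have nAdj_cv5 : ¬G.Adj c v5 := fun h => key3 h25 hcv2.symm h
  have nAdj_bv5 : ¬G.Adj b v5 := fun h => key3 h45 hbv4.symm h
  have nAdj_dv5 : ¬G.Adj d v5 := fun h => key3 h45 hdv4.symm h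
  -- basic distinctness
  have ne12 : v1 ≠ v2 := by
    intro h; rw [← h] at h24
    have h41' : G.edist v1 v4 ≤ 2 := by rwa [SimpleGraph.edist_comm] at h41
    exact absurd (h24.trans h41') (by norm_num)
  have ne23 : v2 ≠ v3 := by
    intro h; rw [h] at h25
    exact absurd (h25.trans (adj_edist_le_one hv3v5)) (by norm_num)
  have ne34 : v3 ≠ v4 := by
    intro h; rw [h] at h23
    exact absurd (h24.trans h23) (by norm_num)
  have ne14 : v1 ≠ v4 := by
    intro h; rw [h] at h13
    have h34' : G.edist v4 v3 ≤ 2 := by rwa [SimpleGraph.edist_comm] at h34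
    exact absurd (h13.trans h34') (by norm_num)
  -- useful distinctness from adjacency clashes
  have ne_v3c : v3 ≠ c := by
    intro h; rw [← h] at hcv1; exact nAdj_v1v3 hcv1.symm
  have ne_v3d : v3 ≠ d := by
    intro h; rw [← h] at hdv1; exact nAdj_v1v3 hdv1.symm
  have ne_v2b : v2 ≠ b := by
    intro h; rw [← h] at hbv4; exact nAdj_v2v4 hbv4
  have ne_v2d : v2 ≠ d := by
    intro h; rw [← h] at hdv4; exact nAdj_v2v4 hdv4
  have ne_v4a : v4 ≠ a := by
    intro h; rw [← h] at hav2; exact nAdj_v2v4 hav2.symm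
  have ne_v4c : v4 ≠ c := by
    intro h; rw [← h] at hcv2; exact nAdj_v2v4 hcv2.symm
  have ne_av1 : a ≠ v1 := by
    intro h; rw [h] at hav3; exact nAdj_v1v3 hav3
  have ne_bv1 : b ≠ v1 := by
    intro h; rw [h] at hbv3; exact nAdj_v1v3 hbv3
  have ne_av5 : a ≠ v5 := by
    intro h; rw [h] at hav2; exact nAdj_v2v5 hav2.symm
  have ne_bv5 : b ≠ v5 := by
    intro h; rw [h] at hbv4; exact nAdj_v4v5 hbv4.symm
  have ne_cv5 : c ≠ v5 := by
    intro h; rw [h] at hcv2; exact nAdj_v2v5 hcv2.symm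
  have ne_dv5 : d ≠ v5 := by
    intro h; rw [h] at hdv4; exact nAdj_v4v5 hdv4.symm
  -- the four "optional" pairs are in fact non-adjacent
  have nv23 : ¬G.Adj v2 v3 := fun hadj =>
    no_banner hBanner v3 v2 c b v5 hadj.symm hcv2.symm hbc.symm hbv3 hv3v5
      (fun h => nAdj_cv3 h.symm) nAdj_v2b nAdj_v2v5 nAdj_cv5 nAdj_bv5
      ne_v3c ne_v2b (keyne h25) ne_cv5 ne_bv5
  have nv34 : ¬G.Adj v3 v4 := fun hadj =>
    no_banner hBanner v3 v4 d a v5 hadj hdv4.symm had.symm hav3 hv3v5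
      (fun h => nAdj_dv3 h.symm) (fun h => nAdj_av4 h.symm) nAdj_v4v5 nAdj_dv5 nAdj_av5
      ne_v3d ne_v4a (keyne h45) ne_dv5 ne_av5
  have nv12 : ¬G.Adj v1 v2 := fun hadj =>
    no_banner hBanner a v2 v1 d v3 hav2 hadj.symm hdv1.symm had.symm hav3
      (fun h => nAdj_v1a h.symm) nAdj_v2d nv23 nAdj_v1v3 nAdj_dv3
      ne_av1 ne_v2d ne23 (keyne h13) ne_v3d.symm
  have nv14 : ¬G.Adj v1 v4 := fun hadj =>
    no_banner hBanner b v4 v1 c v3 hbv4 hadj.symm hcv1.symm hbc.symm hbv3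
      (fun h => nAdj_v1b h.symm) (fun h => nAdj_cv4 h.symm) (fun h => nv34 h.symm)
      nAdj_v1v3 nAdj_cv3
      ne_bv1 ne_v4c ne34.symm (keyne h13) ne_v3c.symm
  -- unpack the efficient dominating set
  obtain ⟨hind, hdom⟩ := hD
  have uniq : ∀ x ∉ D, ∀ u ∈ D, ∀ w ∈ D, G.Adj x u → G.Adj x w → u = w := by
    intro x hx u hu w hw h1 h2
    obtain ⟨z, _, hz⟩ := hdom x hx
    exact (hz u ⟨hu, h1⟩).trans (hz w ⟨hw, h2⟩).symm
  have domn : ∀ x ∉ D, ∃ u, u ∈ D ∧ G.Adj x u := by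
    intro x hx
    obtain ⟨z, hz, _⟩ := hdom x hx
    exact ⟨z, hz⟩
  -- Claim 1 : v2 ∉ D
  have claim_v2 : v2 ∉ D := by
    intro hv2
    have haD : a ∉ D := fun h => hind a h v2 hv2 hav2
    have hcD : c ∉ D := fun h => hind c h v2 hv2 hcv2
    have hv1D : v1 ∉ D := fun h => ne12 (uniq c hcD v1 h v2 hv2 hcv1 hcv2)
    have hv3D : v3 ∉ D := fun h => ne23 (uniq a haD v2 hv2 v3 h hav2 hav3)
    obtain ⟨f, hfD, hfadj⟩ := domn v1 hv1D
    obtain ⟨e, heD, headj⟩ := domn v3 hv3D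
    have hfv2 : f ≠ v2 := by intro h; rw [h] at hfadj; exact nv12 hfadj
    have nfc : ¬G.Adj c f := fun h => hfv2 (uniq c hcD f hfD v2 hv2 h hcv2)
    have nfa : ¬G.Adj a f := fun h => hfv2 (uniq a haD f hfD v2 hv2 h hav2)
    have hev2 : e ≠ v2 := by intro h; rw [h] at headj; exact nv23 headj.symm
    have nce : ¬G.Adj c e := fun h => hev2 (uniq c hcD e heD v2 hv2 h hcv2)
    have nae : ¬G.Adj a e := fun h => hev2 (uniq a haD e heD v2 hv2 h hav2)
    exact no_p6 hP6 f v1 c a v3 e hfadj.symm hcv1.symm hac.symm hav3 headj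
      (fun h => nfc h.symm) (fun h => nfa h.symm) (fun h => key3 h13 hfadj h)
      (hind f hfD e heD) nAdj_v1a nAdj_v1v3 (fun h => key3 h13 h headj.symm)
      nAdj_cv3 nce nae
      (fun h => hcD (h ▸ hfD)) (fun h => haD (h ▸ hfD)) (fun h => hv3D (h ▸ hfD))
      (by intro h; rw [h] at hfadj; exact key3 h13 hfadj headj.symm)
      ne_av1.symm (keyne h13)
      (by intro h; rw [← h] at headj; exact nAdj_v1v3 headj.symm)
      ne_v3c.symm (fun h => hcD (h ▸ heD)) (fun h => haD (h ▸ heD))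
  -- Claim 2 : v4 ∉ D
  have claim_v4 : v4 ∉ D := by
    intro hv4
    have hbD : b ∉ D := fun h => hind b h v4 hv4 hbv4
    have hdD : d ∉ D := fun h => hind d h v4 hv4 hdv4
    have hv1D : v1 ∉ D := fun h => ne14 (uniq d hdD v1 h v4 hv4 hdv1 hdv4)
    have hv3D : v3 ∉ D := fun h => ne34 (uniq b hbD v3 h v4 hv4 hbv3 hbv4)
    obtain ⟨f, hfD, hfadj⟩ := domn v1 hv1D
    obtain ⟨e, heD, headj⟩ := domn v3 hv3D
    have hfv4 : f ≠ v4 := by intro h; rw [h] at hfadj; exact nv14 hfadj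
    have nfd : ¬G.Adj d f := fun h => hfv4 (uniq d hdD f hfD v4 hv4 h hdv4)
    have nfb : ¬G.Adj b f := fun h => hfv4 (uniq b hbD f hfD v4 hv4 h hbv4)
    have hev4 : e ≠ v4 := by intro h; rw [h] at headj; exact nv34 headj
    have nde : ¬G.Adj d e := fun h => hev4 (uniq d hdD e heD v4 hv4 h hdv4)
    have nbe : ¬G.Adj b e := fun h => hev4 (uniq b hbD e heD v4 hv4 h hbv4)
    exact no_p6 hP6 f v1 d b v3 e hfadj.symm hdv1.symm hbd.symm hbv3 headj
      (fun h => nfd h.symm) (fun h => nfb h.symm) (fun h => key3 h13 hfadj h)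
      (hind f hfD e heD) nAdj_v1b nAdj_v1v3 (fun h => key3 h13 h headj.symm)
      nAdj_dv3 nde nbe
      (fun h => hdD (h ▸ hfD)) (fun h => hbD (h ▸ hfD)) (fun h => hv3D (h ▸ hfD))
      (by intro h; rw [h] at hfadj; exact key3 h13 hfadj headj.symm)
      ne_bv1.symm (keyne h13)
      (by intro h; rw [← h] at headj; exact nAdj_v1v3 headj.symm)
      ne_v3d.symm (fun h => hdD (h ▸ heD)) (fun h => hbD (h ▸ heD))
  -- Claim 3 : a ∉ D
  have claim_a : a ∉ D := by
    intro haD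
    have hcD : c ∉ D := fun h => hind c h a haD hac.symm
    have hv3D : v3 ∉ D := fun h => hind a haD v3 h hav3
    have hv1D : v1 ∉ D := by
      intro h
      have hav1 : a = v1 := uniq c hcD a haD v1 h hac.symm hcv1
      exact nAdj_v1v3 (hav1 ▸ hav3)
    obtain ⟨f, hfD, hfadj⟩ := domn v1 hv1D
    have hfa : f ≠ a := by intro h; rw [h] at hfadj; exact nAdj_v1a hfadj
    exact no_p6 hP6 f v1 c a v3 v5 hfadj.symm hcv1.symm hac.symm hav3 hv3v5
      (fun h => hfa (uniq c hcD f hfD a haD h.symm hac.symm))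
      (fun h => hind f hfD a haD h) (fun h => key3 h13 hfadj h)
      (fun h => key3 h15 hfadj h) nAdj_v1a nAdj_v1v3 nAdj_v1v5
      nAdj_cv3 nAdj_cv5 nAdj_av5
      (fun h => hcD (h ▸ hfD)) hfa (fun h => hv3D (h ▸ hfD))
      (by intro h; rw [h] at hfadj; exact nAdj_v1v5 hfadj)
      ne_av1.symm (keyne h13) (keyne h15)
      ne_v3c.symm ne_cv5 ne_av5
  -- Claim 4 : b ∉ D
  have claim_b : b ∉ D := by
    intro hbD
    have hdD : d ∉ D := fun h => hind d h b hbD hbd.symm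
    have hv3D : v3 ∉ D := fun h => hind b hbD v3 h hbv3
    have hv1D : v1 ∉ D := by
      intro h
      have hbv1 : b = v1 := uniq d hdD b hbD v1 h hbd.symm hdv1
      exact nAdj_v1v3 (hbv1 ▸ hbv3)
    obtain ⟨f, hfD, hfadj⟩ := domn v1 hv1D
    have hfb : f ≠ b := by intro h; rw [h] at hfadj; exact nAdj_v1b hfadj
    exact no_p6 hP6 f v1 d b v3 v5 hfadj.symm hdv1.symm hbd.symm hbv3 hv3v5
      (fun h => hfb (uniq d hdD f hfD b hbD h.symm hbd.symm))
      (fun h => hind f hfD b hbD h) (fun h => key3 h13 hfadj h)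
      (fun h => key3 h15 hfadj h) nAdj_v1b nAdj_v1v3 nAdj_v1v5
      nAdj_dv3 nAdj_dv5 nAdj_bv5
      (fun h => hdD (h ▸ hfD)) hfb (fun h => hv3D (h ▸ hfD))
      (by intro h; rw [h] at hfadj; exact nAdj_v1v5 hfadj)
      ne_bv1.symm (keyne h13) (keyne h15)
      ne_v3d.symm ne_dv5 ne_bv5
  -- Claim 5 : c ∉ D
  have claim_c : c ∉ D := by
    intro hcD
    have haD : a ∉ D := fun h => hind a h c hcD hac
    have hbD : b ∉ D := fun h => hind b h c hcD hbc
    have hdD : d ∉ D := fun h => hind d h c hcD hcd.symm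
    have hv3D : v3 ∉ D := by
      intro h
      have hcv3 : c = v3 := uniq a haD c hcD v3 h hac hav3
      exact nAdj_v1v3 ((hcv3 ▸ hcv1).symm)
    have hv4D : v4 ∉ D := by
      intro h
      have hcv4 : c = v4 := uniq b hbD c hcD v4 h hbc hbv4
      exact nAdj_v2v4 ((hcv4 ▸ hcv2).symm)
    obtain ⟨e, heD, headj⟩ := domn v3 hv3D
    obtain ⟨g, hgD, hgadj⟩ := domn v4 hv4D
    have hec : e ≠ c := by intro h; rw [h] at headj; exact nAdj_cv3 headj.symm
    have hgc : g ≠ c := by intro h; rw [h] at hgadj; exact nAdj_cv4 hgadj.symm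
    by_cases heg : e = g
    · subst heg
      exact no_banner hBanner v3 b v4 e v5 hbv3.symm hbv4 hgadj headj.symm hv3v5
        nv34 (fun h => hec (uniq b hbD e heD c hcD h hbc)) nAdj_bv5 nAdj_v4v5
        (fun h => key3 h45 hgadj h)
        ne34 (fun h => hbD (by rw [h]; exact heD)) ne_bv5 (keyne h45)
        (by intro h; rw [h] at hgadj; exact nAdj_v4v5 hgadj)
    · have nv4e : ¬G.Adj v4 e := fun h => heg (uniq v4 hv4D e heD g hgD h hgadj)
      have nv3g : ¬G.Adj v3 g := fun h => heg (uniq v3 hv3D e heD g hgD headj h)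
      exact no_p6 hP6 e v3 a d v4 g headj.symm hav3.symm had hdv4 hgadj
        (fun h => hec (uniq a haD e heD c hcD h.symm hac))
        (fun h => hec (uniq d hdD e heD c hcD h.symm hcd.symm))
        (fun h => nv4e h.symm) (hind e heD g hgD)
        (fun h => nAdj_dv3 h.symm) nv34 nv3g
        nAdj_av4 (fun h => hgc (uniq a haD g hgD c hcD h hac))
        (fun h => hgc (uniq d hdD g hgD c hcD h hcd.symm))
        (fun h => haD (by rw [← h]; exact heD))
        (fun h => hdD (by rw [← h]; exact heD))
        (fun h => hv4D (by rw [← h]; exact heD)) heg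
        ne_v3d ne34 (fun h => hv3D (by rw [h]; exact hgD))
        ne_v4a.symm (fun h => haD (by rw [h]; exact hgD)) (fun h => hdD (by rw [h]; exact hgD))
  -- Claim 6 : d ∉ D
  have claim_d : d ∉ D := by
    intro hdD
    have haD : a ∉ D := fun h => hind a h d hdD had
    have hbD : b ∉ D := fun h => hind b h d hdD hbd
    have hcD : c ∉ D := fun h => hind c h d hdD hcd
    have hv3D : v3 ∉ D := by
      intro h
      have hdv3 : d = v3 := uniq b hbD d hdD v3 h hbd hbv3
      exact nAdj_v1v3 ((hdv3 ▸ hdv1).symm)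
    have hv2D : v2 ∉ D := by
      intro h
      have hdv2 : d = v2 := uniq a haD d hdD v2 h had hav2
      exact nAdj_v2v4 (hdv2 ▸ hdv4)
    obtain ⟨e, heD, headj⟩ := domn v3 hv3D
    obtain ⟨g, hgD, hgadj⟩ := domn v2 hv2D
    have hed : e ≠ d := by intro h; rw [h] at headj; exact nAdj_dv3 headj.symm
    have hgd : g ≠ d := by intro h; rw [h] at hgadj; exact nAdj_v2d hgadj
    by_cases heg : e = g
    · subst heg
      exact no_banner hBanner v3 a v2 e v5 hav3.symm hav2 hgadj headj.symm hv3v5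
        (fun h => nv23 h.symm) (fun h => hed (uniq a haD e heD d hdD h had))
        nAdj_av5 nAdj_v2v5 (fun h => key3 h25 hgadj h)
        ne23.symm (fun h => haD (by rw [h]; exact heD)) ne_av5 (keyne h25)
        (by intro h; rw [h] at hgadj; exact nAdj_v2v5 hgadj)
    · have nv2e : ¬G.Adj v2 e := fun h => heg (uniq v2 hv2D e heD g hgD h hgadj)
      have nv3g : ¬G.Adj v3 g := fun h => heg (uniq v3 hv3D e heD g hgD headj h)
      exact no_p6 hP6 e v3 b c v2 g headj.symm hbv3.symm hbc hcv2 hgadj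
        (fun h => hed (uniq b hbD e heD d hdD h.symm hbd))
        (fun h => hed (uniq c hcD e heD d hdD h.symm hcd))
        (fun h => nv2e h.symm) (hind e heD g hgD)
        (fun h => nAdj_cv3 h.symm) (fun h => nv23 h.symm) nv3g
        (fun h => nAdj_v2b h.symm) (fun h => hgd (uniq b hbD g hgD d hdD h hbd))
        (fun h => hgd (uniq c hcD g hgD d hdD h hcd))
        (fun h => hbD (by rw [← h]; exact heD))
        (fun h => hcD (by rw [← h]; exact heD))
        (fun h => hv2D (by rw [← h]; exact heD)) heg
        ne_v3c ne23.symm (fun h => hv3D (by rw [h]; exact hgD))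
        ne_v2b.symm (fun h => hbD (by rw [h]; exact hgD)) (fun h => hcD (by rw [h]; exact hgD))
  exact ⟨claim_v2, claim_v4, claim_a, claim_b, claim_c, claim_d⟩
end

section
/- Under the Case 1 configuration of the banner-in-square setting, if v2' and v4' are distinct vertices of D with v2'v2, v4'v4, v2'c, v4'd edges of G, and v1' ∈ D is adjacent to v1 in G, then v1' ≠ v2' and v1' ≠ v4'. -/
/- ### Auxiliary lemmas -/

lemma bc1_adj_adj_edist_le_two {V : Type*} (G : SimpleGraph V) {x y z : V}
    (hxy : G.Adj x y) (hyz : G.Adj y z) : G.edist x z ≤ 2 := by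
  calc G.edist x z ≤ G.edist x y + G.edist y z := G.edist_triangle
    _ ≤ 1 + 1 := by
        rw [SimpleGraph.edist_eq_one_iff_adj.2 hxy, SimpleGraph.edist_eq_one_iff_adj.2 hyz]
    _ = 2 := by norm_num

lemma bc1_far_not_adj {V : Type*} (G : SimpleGraph V) {x y : V}
    (h : 3 ≤ G.edist x y) : ¬ G.Adj x y := by
  intro hadj
  rw [← SimpleGraph.edist_eq_one_iff_adj] at hadj
  rw [hadj] at h
  exact absurd h (by decide)

lemma bc1_far_ne {V : Type*} (G : SimpleGraph V) {x y : V}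
    (h : 3 ≤ G.edist x y) : x ≠ y := by
  rintro rfl; simp [SimpleGraph.edist_self] at h

lemma bc1_far_not_adj_mid {V : Type*} (G : SimpleGraph V) {x y z : V}
    (h3 : 3 ≤ G.edist x z) (hxy : G.Adj x y) : ¬ G.Adj y z := fun hyz =>
  absurd (le_trans h3 (bc1_adj_adj_edist_le_two G hxy hyz)) (by decide)

lemma bc1_far_ne_mid {V : Type*} (G : SimpleGraph V) {x y z : V}
    (h3 : 3 ≤ G.edist x z) (hxy : G.Adj x y) : y ≠ z := by
  rintro rfl; exact bc1_far_not_adj G h3 hxy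

lemma bc1_path6_emb {V : Type*} (G : SimpleGraph V) (x0 x1 x2 x3 x4 x5 : V)
    (a01 : G.Adj x0 x1) (a12 : G.Adj x1 x2) (a23 : G.Adj x2 x3) (a34 : G.Adj x3 x4)
    (a45 : G.Adj x4 x5)
    (n02 : ¬ G.Adj x0 x2) (n03 : ¬ G.Adj x0 x3) (n04 : ¬ G.Adj x0 x4) (n05 : ¬ G.Adj x0 x5)
    (n13 : ¬ G.Adj x1 x3) (n14 : ¬ G.Adj x1 x4) (n15 : ¬ G.Adj x1 x5)
    (n24 : ¬ G.Adj x2 x4) (n25 : ¬ G.Adj x2 x5) (n35 : ¬ G.Adj x3 x5)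
    (d02 : x0 ≠ x2) (d03 : x0 ≠ x3) (d04 : x0 ≠ x4) (d05 : x0 ≠ x5)
    (d13 : x1 ≠ x3) (d14 : x1 ≠ x4) (d15 : x1 ≠ x5)
    (d24 : x2 ≠ x4) (d25 : x2 ≠ x5) (d35 : x3 ≠ x5) :
    Nonempty (SimpleGraph.pathGraph 6 ↪g G) := by
  refine ⟨⟨⟨![x0,x1,x2,x3,x4,x5], ?_⟩, ?_⟩⟩
  · intro i j
    fin_cases i <;> fin_cases j <;> intro h
    · rfl
    · exact absurd h (G.ne_of_adj a01)
    · exact absurd h d02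
    · exact absurd h d03
    · exact absurd h d04
    · exact absurd h d05
    · exact absurd h (G.ne_of_adj a01).symm
    · rfl
    · exact absurd h (G.ne_of_adj a12)
    · exact absurd h d13
    · exact absurd h d14
    · exact absurd h d15
    · exact absurd h d02.symm
    · exact absurd h (G.ne_of_adj a12).symm
    · rfl
    · exact absurd h (G.ne_of_adj a23)
    · exact absurd h d24
    · exact absurd h d25
    · exact absurd h d03.symm
    · exact absurd h d13.symm
    · exact absurd h (G.ne_of_adj a23).symm
    · rfl
    · exact absurd h (G.ne_of_adj a34)
    · exact absurd h d35
    · exact absurd h d04.symm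
    · exact absurd h d14.symm
    · exact absurd h d24.symm
    · exact absurd h (G.ne_of_adj a34).symm
    · rfl
    · exact absurd h (G.ne_of_adj a45)
    · exact absurd h d05.symm
    · exact absurd h d15.symm
    · exact absurd h d25.symm
    · exact absurd h d35.symm
    · exact absurd h (G.ne_of_adj a45).symm
    · rfl
  · intro i j
    show G.Adj (![x0,x1,x2,x3,x4,x5] i) (![x0,x1,x2,x3,x4,x5] j) ↔ _
    fin_cases i <;> fin_cases j
    · exact iff_of_false (G.loopless.irrefl _) (by rw [SimpleGraph.pathGraph_adj]; decide)
    · exact iff_of_true a01 (by rw [SimpleGraph.pathGraph_adj]; decide)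
    · exact iff_of_false n02 (by rw [SimpleGraph.pathGraph_adj]; decide)
    · exact iff_of_false n03 (by rw [SimpleGraph.pathGraph_adj]; decide)
    · exact iff_of_false n04 (by rw [SimpleGraph.pathGraph_adj]; decide)
    · exact iff_of_false n05 (by rw [SimpleGraph.pathGraph_adj]; decide)
    · exact iff_of_true a01.symm (by rw [SimpleGraph.pathGraph_adj]; decide)
    · exact iff_of_false (G.loopless.irrefl _) (by rw [SimpleGraph.pathGraph_adj]; decide)
    · exact iff_of_true a12 (by rw [SimpleGraph.pathGraph_adj]; decide)
    · exact iff_of_false n13 (by rw [SimpleGraph.pathGraph_adj]; decide)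
    · exact iff_of_false n14 (by rw [SimpleGraph.pathGraph_adj]; decide)
    · exact iff_of_false n15 (by rw [SimpleGraph.pathGraph_adj]; decide)
    · exact iff_of_false (fun h => n02 h.symm) (by rw [SimpleGraph.pathGraph_adj]; decide)
    · exact iff_of_true a12.symm (by rw [SimpleGraph.pathGraph_adj]; decide)
    · exact iff_of_false (G.loopless.irrefl _) (by rw [SimpleGraph.pathGraph_adj]; decide)
    · exact iff_of_true a23 (by rw [SimpleGraph.pathGraph_adj]; decide)
    · exact iff_of_false n24 (by rw [SimpleGraph.pathGraph_adj]; decide)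
    · exact iff_of_false n25 (by rw [SimpleGraph.pathGraph_adj]; decide)
    · exact iff_of_false (fun h => n03 h.symm) (by rw [SimpleGraph.pathGraph_adj]; decide)
    · exact iff_of_false (fun h => n13 h.symm) (by rw [SimpleGraph.pathGraph_adj]; decide)
    · exact iff_of_true a23.symm (by rw [SimpleGraph.pathGraph_adj]; decide)
    · exact iff_of_false (G.loopless.irrefl _) (by rw [SimpleGraph.pathGraph_adj]; decide)
    · exact iff_of_true a34 (by rw [SimpleGraph.pathGraph_adj]; decide)
    · exact iff_of_false n35 (by rw [SimpleGraph.pathGraph_adj]; decide)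
    · exact iff_of_false (fun h => n04 h.symm) (by rw [SimpleGraph.pathGraph_adj]; decide)
    · exact iff_of_false (fun h => n14 h.symm) (by rw [SimpleGraph.pathGraph_adj]; decide)
    · exact iff_of_false (fun h => n24 h.symm) (by rw [SimpleGraph.pathGraph_adj]; decide)
    · exact iff_of_true a34.symm (by rw [SimpleGraph.pathGraph_adj]; decide)
    · exact iff_of_false (G.loopless.irrefl _) (by rw [SimpleGraph.pathGraph_adj]; decide)
    · exact iff_of_true a45 (by rw [SimpleGraph.pathGraph_adj]; decide)
    · exact iff_of_false (fun h => n05 h.symm) (by rw [SimpleGraph.pathGraph_adj]; decide)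
    · exact iff_of_false (fun h => n15 h.symm) (by rw [SimpleGraph.pathGraph_adj]; decide)
    · exact iff_of_false (fun h => n25 h.symm) (by rw [SimpleGraph.pathGraph_adj]; decide)
    · exact iff_of_false (fun h => n35 h.symm) (by rw [SimpleGraph.pathGraph_adj]; decide)
    · exact iff_of_true a45.symm (by rw [SimpleGraph.pathGraph_adj]; decide)
    · exact iff_of_false (G.loopless.irrefl _) (by rw [SimpleGraph.pathGraph_adj]; decide)

lemma bc1_banner_adj_01 : banner.Adj 0 1 := by simp [banner, SimpleGraph.fromEdgeSet_adj]
lemma bc1_banner_adj_12 : banner.Adj 1 2 := by simp [banner, SimpleGraph.fromEdgeSet_adj]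
lemma bc1_banner_adj_23 : banner.Adj 2 3 := by simp [banner, SimpleGraph.fromEdgeSet_adj]
lemma bc1_banner_adj_30 : banner.Adj 3 0 := by simp [banner, SimpleGraph.fromEdgeSet_adj]
lemma bc1_banner_adj_04 : banner.Adj 0 4 := by simp [banner, SimpleGraph.fromEdgeSet_adj]
lemma bc1_banner_nadj_02 : ¬ banner.Adj 0 2 := by
  simp only [banner, SimpleGraph.fromEdgeSet_adj]; decide
lemma bc1_banner_nadj_13 : ¬ banner.Adj 1 3 := by
  simp only [banner, SimpleGraph.fromEdgeSet_adj]; decide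
lemma bc1_banner_nadj_14 : ¬ banner.Adj 1 4 := by
  simp only [banner, SimpleGraph.fromEdgeSet_adj]; decide
lemma bc1_banner_nadj_24 : ¬ banner.Adj 2 4 := by
  simp only [banner, SimpleGraph.fromEdgeSet_adj]; decide
lemma bc1_banner_nadj_34 : ¬ banner.Adj 3 4 := by
  simp only [banner, SimpleGraph.fromEdgeSet_adj]; decide

lemma bc1_banner_emb {V : Type*} (G : SimpleGraph V) (y0 y1 y2 y3 y4 : V)
    (a01 : G.Adj y0 y1) (a12 : G.Adj y1 y2) (a23 : G.Adj y2 y3) (a30 : G.Adj y3 y0)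
    (a04 : G.Adj y0 y4)
    (n02 : ¬ G.Adj y0 y2) (n13 : ¬ G.Adj y1 y3) (n14 : ¬ G.Adj y1 y4)
    (n24 : ¬ G.Adj y2 y4) (n34 : ¬ G.Adj y3 y4)
    (d02 : y0 ≠ y2) (d13 : y1 ≠ y3) (d14 : y1 ≠ y4) (d24 : y2 ≠ y4) (d34 : y3 ≠ y4) :
    Nonempty (banner ↪g G) := by
  refine ⟨⟨⟨![y0,y1,y2,y3,y4], ?_⟩, ?_⟩⟩
  · intro i j
    fin_cases i <;> fin_cases j <;> intro h
    · rfl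
    · exact absurd h (G.ne_of_adj a01)
    · exact absurd h d02
    · exact absurd h (G.ne_of_adj a30).symm
    · exact absurd h (G.ne_of_adj a04)
    · exact absurd h (G.ne_of_adj a01).symm
    · rfl
    · exact absurd h (G.ne_of_adj a12)
    · exact absurd h d13
    · exact absurd h d14
    · exact absurd h d02.symm
    · exact absurd h (G.ne_of_adj a12).symm
    · rfl
    · exact absurd h (G.ne_of_adj a23)
    · exact absurd h d24
    · exact absurd h (G.ne_of_adj a30)
    · exact absurd h d13.symm
    · exact absurd h (G.ne_of_adj a23).symm
    · rfl
    · exact absurd h d34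
    · exact absurd h (G.ne_of_adj a04).symm
    · exact absurd h d14.symm
    · exact absurd h d24.symm
    · exact absurd h d34.symm
    · rfl
  · intro i j
    fin_cases i <;> fin_cases j
    · exact iff_of_false (G.loopless.irrefl _) (banner.loopless.irrefl _)
    · exact iff_of_true a01 bc1_banner_adj_01
    · exact iff_of_false n02 bc1_banner_nadj_02
    · exact iff_of_true a30.symm bc1_banner_adj_30.symm
    · exact iff_of_true a04 bc1_banner_adj_04
    · exact iff_of_true a01.symm bc1_banner_adj_01.symm
    · exact iff_of_false (G.loopless.irrefl _) (banner.loopless.irrefl _)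
    · exact iff_of_true a12 bc1_banner_adj_12
    · exact iff_of_false n13 bc1_banner_nadj_13
    · exact iff_of_false n14 bc1_banner_nadj_14
    · exact iff_of_false (fun h => n02 h.symm) (fun h => bc1_banner_nadj_02 h.symm)
    · exact iff_of_true a12.symm bc1_banner_adj_12.symm
    · exact iff_of_false (G.loopless.irrefl _) (banner.loopless.irrefl _)
    · exact iff_of_true a23 bc1_banner_adj_23
    · exact iff_of_false n24 bc1_banner_nadj_24
    · exact iff_of_true a30 bc1_banner_adj_30
    · exact iff_of_false (fun h => n13 h.symm) (fun h => bc1_banner_nadj_13 h.symm)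
    · exact iff_of_true a23.symm bc1_banner_adj_23.symm
    · exact iff_of_false (G.loopless.irrefl _) (banner.loopless.irrefl _)
    · exact iff_of_false n34 bc1_banner_nadj_34
    · exact iff_of_true a04.symm bc1_banner_adj_04.symm
    · exact iff_of_false (fun h => n14 h.symm) (fun h => bc1_banner_nadj_14 h.symm)
    · exact iff_of_false (fun h => n24 h.symm) (fun h => bc1_banner_nadj_24 h.symm)
    · exact iff_of_false (fun h => n34 h.symm) (fun h => bc1_banner_nadj_34 h.symm)
    · exact iff_of_false (G.loopless.irrefl _) (banner.loopless.irrefl _)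

theorem banner_case1_v1p_ne {V : Type*} [Fintype V] (G : SimpleGraph V)
    (hP6 : IsInducedFree (SimpleGraph.pathGraph 6) G)
    (hBanner : IsInducedFree banner G)
    (D : Set V) (hD : G.IsEfficientDominatingSet D)
    (v1 v2 v3 v4 v5 : V)
    (h12 : G.edist v1 v2 ≤ 2) (h23 : G.edist v2 v3 ≤ 2) (h34 : G.edist v3 v4 ≤ 2)
    (h41 : G.edist v4 v1 ≤ 2) (h35 : G.edist v3 v5 ≤ 2)
    (h13 : 3 ≤ G.edist v1 v3) (h15 : 3 ≤ G.edist v1 v5) (h24 : 3 ≤ G.edist v2 v4)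
    (h25 : 3 ≤ G.edist v2 v5) (h45 : 3 ≤ G.edist v4 v5)
    (hv3v5 : G.Adj v3 v5)
    (a b c d : V)
    (hav2 : G.Adj a v2) (hav3 : G.Adj a v3) (hbv3 : G.Adj b v3) (hbv4 : G.Adj b v4)
    (hcv1 : G.Adj c v1) (hcv2 : G.Adj c v2) (hac : G.Adj a c) (hdv1 : G.Adj d v1)
    (hdv4 : G.Adj d v4) (hbd : G.Adj b d) (hcd : G.Adj c d) (hbc : G.Adj b c)
    (had : G.Adj a d) (hab : G.Adj a b)
    (v2' v4' : V) (hne : v2' ≠ v4') (hv2'D : v2' ∈ D) (hv4'D : v4' ∈ D)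
    (hv2'v2 : G.Adj v2' v2) (hv4'v4 : G.Adj v4' v4)
    (hv2'c : G.Adj v2' c) (hv4'd : G.Adj v4' d)
    (v1' : V) (hv1'D : v1' ∈ D) (hv1'v1 : G.Adj v1' v1)
    : v1' ≠ v2' ∧ v1' ≠ v4' := by
  have h31 : 3 ≤ G.edist v3 v1 := by rwa [SimpleGraph.edist_comm] at h13
  have hcD : c ∉ D := fun h => hD.1 c h v2' hv2'D hv2'c.symm
  have hdD : d ∉ D := fun h => hD.1 d h v4' hv4'D hv4'd.symm
  have key_c : ¬ G.Adj v4' c := fun h =>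
    hne ((hD.2 c hcD).unique ⟨hv2'D, hv2'c.symm⟩ ⟨hv4'D, h.symm⟩)
  have key_d : ¬ G.Adj v2' d := fun h =>
    hne ((hD.2 d hdD).unique ⟨hv2'D, h.symm⟩ ⟨hv4'D, hv4'd.symm⟩)
  constructor
  · -- v1' ≠ v2'
    intro heq
    have hA : G.Adj v2' v1 := heq ▸ hv1'v1
    have nbv1 : ¬ G.Adj b v1 := bc1_far_not_adj_mid G h31 hbv3.symm
    have dbv1 : b ≠ v1 := bc1_far_ne_mid G h31 hbv3.symm
    have dv2'v3 : v2' ≠ v3 := bc1_far_ne_mid G h13 hA.symm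
    have nv2'v3 : ¬ G.Adj v2' v3 := bc1_far_not_adj_mid G h13 hA.symm
    have ddv3 : d ≠ v3 := bc1_far_ne_mid G h13 hdv1.symm
    have ndv3 : ¬ G.Adj d v3 := bc1_far_not_adj_mid G h13 hdv1.symm
    have ddv2' : d ≠ v2' := fun h =>
      absurd (le_trans h24 (bc1_adj_adj_edist_le_two G hv2'v2.symm (h ▸ hdv4))) (by decide)
    by_cases hbB : G.Adj b v2'
    · -- banner b, v2', v1, d, v3
      obtain ⟨e⟩ := bc1_banner_emb G b v2' v1 d v3 hbB hA hdv1.symm hbd.symm hbv3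
        nbv1 key_d nv2'v3 (bc1_far_not_adj G h13) ndv3
        dbv1 ddv2'.symm dv2'v3 (bc1_far_ne G h13) ddv3
      exact hBanner.false e
    · -- P6 : v5 v3 b d v1 v2'
      obtain ⟨e⟩ := bc1_path6_emb G v5 v3 b d v1 v2'
        hv3v5.symm hbv3.symm hbd hdv1 hA.symm
        (fun h => bc1_far_not_adj_mid G h45 hbv4.symm h.symm)
        (fun h => bc1_far_not_adj_mid G h45 hdv4.symm h.symm)
        (fun h => bc1_far_not_adj G h15 h.symm)
        (fun h => bc1_far_not_adj_mid G h25 hv2'v2.symm h.symm)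
        (fun h => ndv3 h.symm)
        (fun h => bc1_far_not_adj G h13 h.symm)
        (fun h => nv2'v3 h.symm)
        nbv1 hbB (fun h => key_d h.symm)
        (bc1_far_ne_mid G h45 hbv4.symm).symm
        (bc1_far_ne_mid G h45 hdv4.symm).symm
        (bc1_far_ne G h15).symm
        (bc1_far_ne_mid G h25 hv2'v2.symm).symm
        ddv3.symm (bc1_far_ne G h13).symm dv2'v3.symm
        dbv1
        (fun h => absurd (le_trans h24
          (bc1_adj_adj_edist_le_two G hv2'v2.symm (h ▸ hbv4))) (by decide))
        ddv2'
      exact hP6.false e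
  · -- v1' ≠ v4'
    intro heq
    have hA4 : G.Adj v4' v1 := heq ▸ hv1'v1
    have nav1 : ¬ G.Adj a v1 := bc1_far_not_adj_mid G h31 hav3.symm
    have dav1 : a ≠ v1 := bc1_far_ne_mid G h31 hav3.symm
    have dv4'v3 : v4' ≠ v3 := bc1_far_ne_mid G h13 hA4.symm
    have nv4'v3 : ¬ G.Adj v4' v3 := bc1_far_not_adj_mid G h13 hA4.symm
    have dcv3 : c ≠ v3 := bc1_far_ne_mid G h13 hcv1.symm
    have ncv3 : ¬ G.Adj c v3 := bc1_far_not_adj_mid G h13 hcv1.symm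
    have dcv4' : c ≠ v4' := fun h =>
      absurd (le_trans h24 (bc1_adj_adj_edist_le_two G hcv2.symm (by rw [h]; exact hv4'v4)))
        (by decide)
    by_cases haB : G.Adj a v4'
    · -- banner a, v4', v1, c, v3
      obtain ⟨e⟩ := bc1_banner_emb G a v4' v1 c v3 haB hA4 hcv1.symm hac.symm hav3
        nav1 (fun h => key_c h) nv4'v3 (bc1_far_not_adj G h13) ncv3
        dav1 dcv4'.symm dv4'v3 (bc1_far_ne G h13) dcv3
      exact hBanner.false e
    · -- P6 : v5 v3 a c v1 v4'
      obtain ⟨e⟩ := bc1_path6_emb G v5 v3 a c v1 v4'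
        hv3v5.symm hav3.symm hac hcv1 hA4.symm
        (fun h => bc1_far_not_adj_mid G h25 hav2.symm h.symm)
        (fun h => bc1_far_not_adj_mid G h25 hcv2.symm h.symm)
        (fun h => bc1_far_not_adj G h15 h.symm)
        (fun h => bc1_far_not_adj_mid G h45 hv4'v4.symm h.symm)
        (fun h => ncv3 h.symm)
        (fun h => bc1_far_not_adj G h13 h.symm)
        (fun h => nv4'v3 h.symm)
        nav1 haB (fun h => key_c h.symm)
        (bc1_far_ne_mid G h25 hav2.symm).symm
        (bc1_far_ne_mid G h25 hcv2.symm).symm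
        (bc1_far_ne G h15).symm
        (bc1_far_ne_mid G h45 hv4'v4.symm).symm
        dcv3.symm (bc1_far_ne G h13).symm dv4'v3.symm
        dav1
        (fun h => absurd (le_trans h24
          (bc1_adj_adj_edist_le_two G hav2.symm (by rw [h]; exact hv4'v4))) (by decide))
        dcv4'
      exact hP6.false e
end

section
/- Under the Case 2 configuration of the banner-in-square setting, if additionally ac, ab, bc, cd, de, be are edges of G, then none of the vertices v2, v4, b, c, d, e belongs to D. -/
set_option linter.unreachableTactic false
set_option maxHeartbeats 1000000

section bc2helpers
variable {V : Type*} {G : SimpleGraph V}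
variable {V : Type*} {G : SimpleGraph V}

lemma absP6 (hP6 : IsInducedFree (SimpleGraph.pathGraph 6) G)
    (x0 x1 x2 x3 x4 x5 : V)
    (a01 : G.Adj x0 x1) (a12 : G.Adj x1 x2) (a23 : G.Adj x2 x3)
    (a34 : G.Adj x3 x4) (a45 : G.Adj x4 x5)
    (n02 : x0 ≠ x2 ∧ ¬G.Adj x0 x2) (n03 : x0 ≠ x3 ∧ ¬G.Adj x0 x3)
    (n04 : x0 ≠ x4 ∧ ¬G.Adj x0 x4) (n05 : x0 ≠ x5 ∧ ¬G.Adj x0 x5)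
    (n13 : x1 ≠ x3 ∧ ¬G.Adj x1 x3) (n14 : x1 ≠ x4 ∧ ¬G.Adj x1 x4)
    (n15 : x1 ≠ x5 ∧ ¬G.Adj x1 x5) (n24 : x2 ≠ x4 ∧ ¬G.Adj x2 x4)
    (n25 : x2 ≠ x5 ∧ ¬G.Adj x2 x5) (n35 : x3 ≠ x5 ∧ ¬G.Adj x3 x5) : False := by
  apply hP6.false
  refine ⟨⟨fun i => match i with
    | ⟨0,_⟩ => x0 | ⟨1,_⟩ => x1 | ⟨2,_⟩ => x2 | ⟨3,_⟩ => x3 | ⟨4,_⟩ => x4 | ⟨5,_⟩ => x5, ?_⟩, ?_⟩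
  · intro i j h
    fin_cases i <;> fin_cases j
    · rfl
    · exact absurd h a01.ne
    · exact absurd h n02.1
    · exact absurd h n03.1
    · exact absurd h n04.1
    · exact absurd h n05.1
    · exact absurd h a01.ne'
    · rfl
    · exact absurd h a12.ne
    · exact absurd h n13.1
    · exact absurd h n14.1
    · exact absurd h n15.1
    · exact absurd h n02.1.symm
    · exact absurd h a12.ne'
    · rfl
    · exact absurd h a23.ne
    · exact absurd h n24.1
    · exact absurd h n25.1
    · exact absurd h n03.1.symm
    · exact absurd h n13.1.symm
    · exact absurd h a23.ne'
    · rfl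
    · exact absurd h a34.ne
    · exact absurd h n35.1
    · exact absurd h n04.1.symm
    · exact absurd h n14.1.symm
    · exact absurd h n24.1.symm
    · exact absurd h a34.ne'
    · rfl
    · exact absurd h a45.ne
    · exact absurd h n05.1.symm
    · exact absurd h n15.1.symm
    · exact absurd h n25.1.symm
    · exact absurd h n35.1.symm
    · exact absurd h a45.ne'
    · rfl
  · intro i j
    fin_cases i <;> fin_cases j
    · exact iff_of_false (G.irrefl) (by rw [SimpleGraph.pathGraph_adj]; decide)
    · exact iff_of_true a01 (by rw [SimpleGraph.pathGraph_adj]; decide)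
    · exact iff_of_false n02.2 (by rw [SimpleGraph.pathGraph_adj]; decide)
    · exact iff_of_false n03.2 (by rw [SimpleGraph.pathGraph_adj]; decide)
    · exact iff_of_false n04.2 (by rw [SimpleGraph.pathGraph_adj]; decide)
    · exact iff_of_false n05.2 (by rw [SimpleGraph.pathGraph_adj]; decide)
    · exact iff_of_true a01.symm (by rw [SimpleGraph.pathGraph_adj]; decide)
    · exact iff_of_false (G.irrefl) (by rw [SimpleGraph.pathGraph_adj]; decide)
    · exact iff_of_true a12 (by rw [SimpleGraph.pathGraph_adj]; decide)
    · exact iff_of_false n13.2 (by rw [SimpleGraph.pathGraph_adj]; decide)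
    · exact iff_of_false n14.2 (by rw [SimpleGraph.pathGraph_adj]; decide)
    · exact iff_of_false n15.2 (by rw [SimpleGraph.pathGraph_adj]; decide)
    · exact iff_of_false (fun hh => n02.2 hh.symm) (by rw [SimpleGraph.pathGraph_adj]; decide)
    · exact iff_of_true a12.symm (by rw [SimpleGraph.pathGraph_adj]; decide)
    · exact iff_of_false (G.irrefl) (by rw [SimpleGraph.pathGraph_adj]; decide)
    · exact iff_of_true a23 (by rw [SimpleGraph.pathGraph_adj]; decide)
    · exact iff_of_false n24.2 (by rw [SimpleGraph.pathGraph_adj]; decide)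
    · exact iff_of_false n25.2 (by rw [SimpleGraph.pathGraph_adj]; decide)
    · exact iff_of_false (fun hh => n03.2 hh.symm) (by rw [SimpleGraph.pathGraph_adj]; decide)
    · exact iff_of_false (fun hh => n13.2 hh.symm) (by rw [SimpleGraph.pathGraph_adj]; decide)
    · exact iff_of_true a23.symm (by rw [SimpleGraph.pathGraph_adj]; decide)
    · exact iff_of_false (G.irrefl) (by rw [SimpleGraph.pathGraph_adj]; decide)
    · exact iff_of_true a34 (by rw [SimpleGraph.pathGraph_adj]; decide)
    · exact iff_of_false n35.2 (by rw [SimpleGraph.pathGraph_adj]; decide)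
    · exact iff_of_false (fun hh => n04.2 hh.symm) (by rw [SimpleGraph.pathGraph_adj]; decide)
    · exact iff_of_false (fun hh => n14.2 hh.symm) (by rw [SimpleGraph.pathGraph_adj]; decide)
    · exact iff_of_false (fun hh => n24.2 hh.symm) (by rw [SimpleGraph.pathGraph_adj]; decide)
    · exact iff_of_true a34.symm (by rw [SimpleGraph.pathGraph_adj]; decide)
    · exact iff_of_false (G.irrefl) (by rw [SimpleGraph.pathGraph_adj]; decide)
    · exact iff_of_true a45 (by rw [SimpleGraph.pathGraph_adj]; decide)
    · exact iff_of_false (fun hh => n05.2 hh.symm) (by rw [SimpleGraph.pathGraph_adj]; decide)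
    · exact iff_of_false (fun hh => n15.2 hh.symm) (by rw [SimpleGraph.pathGraph_adj]; decide)
    · exact iff_of_false (fun hh => n25.2 hh.symm) (by rw [SimpleGraph.pathGraph_adj]; decide)
    · exact iff_of_false (fun hh => n35.2 hh.symm) (by rw [SimpleGraph.pathGraph_adj]; decide)
    · exact iff_of_true a45.symm (by rw [SimpleGraph.pathGraph_adj]; decide)
    · exact iff_of_false (G.irrefl) (by rw [SimpleGraph.pathGraph_adj]; decide)

lemma absBanner (hB : IsInducedFree banner G)
    (x0 x1 x2 x3 x4 : V)
    (a01 : G.Adj x0 x1) (a12 : G.Adj x1 x2) (a23 : G.Adj x2 x3)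
    (a30 : G.Adj x3 x0) (a04 : G.Adj x0 x4)
    (n02 : x0 ≠ x2 ∧ ¬G.Adj x0 x2) (n13 : x1 ≠ x3 ∧ ¬G.Adj x1 x3)
    (n14 : x1 ≠ x4 ∧ ¬G.Adj x1 x4) (n24 : x2 ≠ x4 ∧ ¬G.Adj x2 x4)
    (n34 : x3 ≠ x4 ∧ ¬G.Adj x3 x4) : False := by
  apply hB.false
  refine ⟨⟨fun i => match i with
    | ⟨0,_⟩ => x0 | ⟨1,_⟩ => x1 | ⟨2,_⟩ => x2 | ⟨3,_⟩ => x3 | ⟨4,_⟩ => x4, ?_⟩, ?_⟩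
  · intro i j h
    fin_cases i <;> fin_cases j
    · rfl
    · exact absurd h a01.ne
    · exact absurd h n02.1
    · exact absurd h a30.symm.ne
    · exact absurd h a04.ne
    · exact absurd h a01.symm.ne
    · rfl
    · exact absurd h a12.ne
    · exact absurd h n13.1
    · exact absurd h n14.1
    · exact absurd h n02.1.symm
    · exact absurd h a12.symm.ne
    · rfl
    · exact absurd h a23.ne
    · exact absurd h n24.1
    · exact absurd h a30.ne
    · exact absurd h n13.1.symm
    · exact absurd h a23.symm.ne
    · rfl
    · exact absurd h n34.1
    · exact absurd h a04.symm.ne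
    · exact absurd h n14.1.symm
    · exact absurd h n24.1.symm
    · exact absurd h n34.1.symm
    · rfl
  · intro i j
    fin_cases i <;> fin_cases j
    · exact iff_of_false (G.irrefl) (by simp [banner])
    · exact iff_of_true a01 (by simp [banner, Sym2.eq_iff] <;> decide)
    · exact iff_of_false n02.2 (by simp [banner, Sym2.eq_iff] <;> decide)
    · exact iff_of_true a30.symm (by simp [banner, Sym2.eq_iff] <;> decide)
    · exact iff_of_true a04 (by simp [banner, Sym2.eq_iff] <;> decide)
    · exact iff_of_true a01.symm (by simp [banner, Sym2.eq_iff] <;> decide)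
    · exact iff_of_false (G.irrefl) (by simp [banner])
    · exact iff_of_true a12 (by simp [banner, Sym2.eq_iff] <;> decide)
    · exact iff_of_false n13.2 (by simp [banner, Sym2.eq_iff] <;> decide)
    · exact iff_of_false n14.2 (by simp [banner, Sym2.eq_iff] <;> decide)
    · exact iff_of_false (fun hh => n02.2 hh.symm) (by simp [banner, Sym2.eq_iff] <;> decide)
    · exact iff_of_true a12.symm (by simp [banner, Sym2.eq_iff] <;> decide)
    · exact iff_of_false (G.irrefl) (by simp [banner])
    · exact iff_of_true a23 (by simp [banner, Sym2.eq_iff] <;> decide)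
    · exact iff_of_false n24.2 (by simp [banner, Sym2.eq_iff] <;> decide)
    · exact iff_of_true a30 (by simp [banner, Sym2.eq_iff] <;> decide)
    · exact iff_of_false (fun hh => n13.2 hh.symm) (by simp [banner, Sym2.eq_iff] <;> decide)
    · exact iff_of_true a23.symm (by simp [banner, Sym2.eq_iff] <;> decide)
    · exact iff_of_false (G.irrefl) (by simp [banner])
    · exact iff_of_false n34.2 (by simp [banner, Sym2.eq_iff] <;> decide)
    · exact iff_of_true a04.symm (by simp [banner, Sym2.eq_iff] <;> decide)
    · exact iff_of_false (fun hh => n14.2 hh.symm) (by simp [banner, Sym2.eq_iff] <;> decide)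
    · exact iff_of_false (fun hh => n24.2 hh.symm) (by simp [banner, Sym2.eq_iff] <;> decide)
    · exact iff_of_false (fun hh => n34.2 hh.symm) (by simp [banner, Sym2.eq_iff] <;> decide)
    · exact iff_of_false (G.irrefl) (by simp [banner])
variable {V : Type*} {G : SimpleGraph V}

lemma ruleA {p q : V} (h : 3 ≤ G.edist p q) : p ≠ q ∧ ¬G.Adj p q := by
  constructor
  · rintro rfl
    rw [SimpleGraph.edist_self] at h
    norm_num at h
  · intro hadj
    rw [← SimpleGraph.edist_eq_one_iff_adj] at hadj
    rw [hadj] at h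
    norm_num at h

lemma ruleB {p q u : V} (h : 3 ≤ G.edist p q) (hup : G.Adj u p) : u ≠ q ∧ ¬G.Adj u q := by
  have e1 : G.edist p u = 1 := SimpleGraph.edist_eq_one_iff_adj.mpr hup.symm
  constructor
  · rintro rfl
    have h2 : (3 : ℕ∞) ≤ 1 := e1 ▸ h
    norm_num at h2
  · intro huq
    have e2 : G.edist u q = 1 := SimpleGraph.edist_eq_one_iff_adj.mpr huq
    have tri : G.edist p q ≤ G.edist p u + G.edist u q := SimpleGraph.edist_triangle
    rw [e1, e2] at tri
    have h2 : (3 : ℕ∞) ≤ 1 + 1 := h.trans tri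
    norm_num at h2

lemma two_step {p q u : V} (h : 3 ≤ G.edist p q) (h1 : G.Adj p u) (h2 : G.Adj u q) : False :=
  (ruleB h h1.symm).2 h2

lemma nsymm {x y : V} (h : x ≠ y ∧ ¬G.Adj x y) : y ≠ x ∧ ¬G.Adj y x :=
  ⟨h.1.symm, fun hh => h.2 hh.symm⟩

lemma notinD {D : Set V} (hD : G.IsEfficientDominatingSet D) {x v : V}
    (hx : x ∈ D) (h : G.Adj x v) : v ∉ D := fun hv => hD.1 x hx v hv h

lemma eq_dom {D : Set V} (hD : G.IsEfficientDominatingSet D) {v z u : V} (hv : v ∉ D)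
    (hz : z ∈ D) (hvz : G.Adj v z) (hu : u ∈ D) (hvu : G.Adj v u) : u = z := by
  obtain ⟨u0, _, huniq⟩ := hD.2 v hv
  rw [huniq u ⟨hu, hvu⟩, huniq z ⟨hz, hvz⟩]

lemma notin_second {D : Set V} (hD : G.IsEfficientDominatingSet D) {v z u : V} (hv : v ∉ D)
    (hz : z ∈ D) (hvz : G.Adj v z) (hne : u ≠ z) (hvu : G.Adj v u) : u ∉ D :=
  fun hu => hne (eq_dom hD hv hz hvz hu hvu)

lemma nadj_dom {D : Set V} (hD : G.IsEfficientDominatingSet D) {v z u : V} (hv : v ∉ D)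
    (hz : z ∈ D) (hvz : G.Adj v z) (hu : u ∈ D) (hne : u ≠ z) : ¬G.Adj v u :=
  fun hvu => hne (eq_dom hD hv hz hvz hu hvu)

end bc2helpers

theorem banner_case2_vertices_notin_D {V : Type*} [Fintype V] (G : SimpleGraph V)
    (hP6 : IsInducedFree (SimpleGraph.pathGraph 6) G)
    (hBanner : IsInducedFree banner G)
    (D : Set V) (hD : G.IsEfficientDominatingSet D)
    (v1 v2 v3 v4 v5 : V)
    (h12 : G.edist v1 v2 ≤ 2) (h23 : G.edist v2 v3 ≤ 2) (h34 : G.edist v3 v4 ≤ 2)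
    (h41 : G.edist v4 v1 ≤ 2) (h35 : G.edist v3 v5 ≤ 2)
    (h13 : 3 ≤ G.edist v1 v3) (h15 : 3 ≤ G.edist v1 v5) (h24 : 3 ≤ G.edist v2 v4)
    (h25 : 3 ≤ G.edist v2 v5) (h45 : 3 ≤ G.edist v4 v5)
    (hdist35 : G.edist v3 v5 = 2)
    (a b c d e : V)
    (hav3 : G.Adj a v3) (hav5 : G.Adj a v5) (hbv2 : G.Adj b v2) (hbv3 : G.Adj b v3)
    (hcv3 : G.Adj c v3) (hcv4 : G.Adj c v4) (hdv1 : G.Adj d v1) (hdv4 : G.Adj d v4)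
    (hev1 : G.Adj e v1) (hev2 : G.Adj e v2)
    (hac : G.Adj a c) (hab : G.Adj a b) (hbc : G.Adj b c) (hcd : G.Adj c d)
    (hde : G.Adj d e) (hbe : G.Adj b e)
    : v2 ∉ D ∧ v4 ∉ D ∧ b ∉ D ∧ c ∉ D ∧ d ∉ D ∧ e ∉ D := by
  have nA13 := ruleA h13
  have nA15 := ruleA h15
  have nA24 := ruleA h24
  have nA25 := ruleA h25
  have nA45 := ruleA h45
  have h31 : 3 ≤ G.edist v3 v1 := by rw [SimpleGraph.edist_comm]; exact h13
  have h51 : 3 ≤ G.edist v5 v1 := by rw [SimpleGraph.edist_comm]; exact h15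
  have h42 : 3 ≤ G.edist v4 v2 := by rw [SimpleGraph.edist_comm]; exact h24
  have h52 : 3 ≤ G.edist v5 v2 := by rw [SimpleGraph.edist_comm]; exact h25
  have h54 : 3 ≤ G.edist v5 v4 := by rw [SimpleGraph.edist_comm]; exact h45
  have nd3 := ruleB h13 hdv1
  have ne3 := ruleB h13 hev1
  have na1 := ruleB h31 hav3
  have nb1 := ruleB h31 hbv3
  have nc1 := ruleB h31 hcv3
  have nd5 := ruleB h15 hdv1
  have ne5 := ruleB h15 hev1
  have nb4 := ruleB h24 hbv2
  have ne4 := ruleB h24 hev2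
  have nc2 := ruleB h42 hcv4
  have nd2 := ruleB h42 hdv4
  have nb5 := ruleB h25 hbv2
  have na2 := ruleB h52 hav5
  have nc5 := ruleB h45 hcv4
  have na4 := ruleB h54 hav5
  have n35 : v3 ≠ v5 ∧ ¬G.Adj v3 v5 := by
    constructor
    · rintro rfl
      rw [SimpleGraph.edist_self] at hdist35
      norm_num at hdist35
    · intro hadj
      rw [← SimpleGraph.edist_eq_one_iff_adj] at hadj
      rw [hadj] at hdist35
      norm_num at hdist35
  have ne12 : v1 ≠ v2 := fun hh => nd2.2 (by rw [← hh]; exact hdv1)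
  have ne23 : v2 ≠ v3 := fun hh => na2.2 (by rw [hh]; exact hav3)
  have ne34 : v3 ≠ v4 := fun hh => na4.2 (by rw [← hh]; exact hav3)
  have ne41 : v4 ≠ v1 := fun hh => ne4.2 (by rw [hh]; exact hev1)
  have neae : a ≠ e := fun hh => ne3.2 (by rw [← hh]; exact hav3)
  have nead : a ≠ d := fun hh => nd3.2 (by rw [← hh]; exact hav3)
  have nebd : b ≠ d := fun hh => nd3.2 (by rw [← hh]; exact hbv3)
  have nece : c ≠ e := fun hh => ne3.2 (by rw [← hh]; exact hcv3)
  -- the four "square" pairs are non-adjacent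
  have nv23 : ¬G.Adj v2 v3 := by
    intro hA
    by_cases hae : G.Adj a e
    · exact absBanner hBanner a v3 v2 e v5 hav3 hA.symm hev2.symm hae.symm hav5
        na2 (nsymm ne3) n35 nA25 ne5
    · by_cases h12A : G.Adj v1 v2
      · exact two_step h13 h12A hA
      · exact absP6 hP6 v1 e v2 v3 a v5 hev1.symm hev2 hA hav3.symm hav5
          ⟨ne12, h12A⟩ nA13 (nsymm na1) nA15 ne3
          ⟨neae.symm, fun hh => hae hh.symm⟩ ne5 (nsymm na2) nA25 n35
  have nv34 : ¬G.Adj v3 v4 := by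
    intro hA
    by_cases had : G.Adj a d
    · exact absBanner hBanner a v3 v4 d v5 hav3 hA hdv4.symm had.symm hav5
        na4 (nsymm nd3) n35 nA45 nd5
    · by_cases h41A : G.Adj v4 v1
      · exact two_step h13 h41A.symm hA.symm
      · exact absP6 hP6 v1 d v4 v3 a v5 hdv1.symm hdv4 hA.symm hav3.symm hav5
          ⟨ne41.symm, fun hh => h41A hh.symm⟩ nA13 (nsymm na1) nA15 nd3
          ⟨nead.symm, fun hh => had hh.symm⟩ nd5 (nsymm na4) nA45 n35
  have nv12 : ¬G.Adj v1 v2 := by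
    intro hA
    by_cases had : G.Adj a d
    · by_cases hbd : G.Adj b d
      · exact absBanner hBanner b v2 v1 d v3 hbv2 hA.symm hdv1.symm hbd.symm hbv3
          nb1 (nsymm nd2) ⟨ne23, nv23⟩ nA13 nd3
      · by_cases hae : G.Adj a e
        · by_cases h41A : G.Adj v4 v1
          · exact two_step h24 hA.symm h41A.symm
          · exact absP6 hP6 v3 b v2 v1 d v4 hbv3.symm hbv2 hA.symm hdv1.symm hdv4
              ⟨ne23.symm, fun hh => nv23 hh.symm⟩ (nsymm nA13) (nsymm nd3) ⟨ne34, nv34⟩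
              nb1 ⟨nebd, hbd⟩ nb4 (nsymm nd2) nA24
              ⟨ne41.symm, fun hh => h41A hh.symm⟩
        · exact absBanner hBanner a b e d v5 hab hbe hde.symm had.symm hav5
            ⟨neae, hae⟩ ⟨nebd, hbd⟩ nb5 ne5 nd5
    · exact absP6 hP6 v2 v1 d c a v5 hA.symm hdv1.symm hcd.symm hac.symm hav5
        (nsymm nd2) (nsymm nc2) (nsymm na2) nA25 (nsymm nc1) (nsymm na1) nA15
        ⟨nead.symm, fun hh => had hh.symm⟩ nd5 nc5
  have nv41 : ¬G.Adj v4 v1 := by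
    intro hA
    by_cases hae : G.Adj a e
    · by_cases hce : G.Adj c e
      · exact absBanner hBanner c v4 v1 e v3 hcv4 hA hev1.symm hce.symm hcv3
          nc1 (nsymm ne4) ⟨ne34.symm, fun hh => nv34 hh.symm⟩ nA13 ne3
      · by_cases had : G.Adj a d
        · exact absP6 hP6 v3 c v4 v1 e v2 hcv3.symm hcv4 hA hev1.symm hev2
            ⟨ne34, nv34⟩ (nsymm nA13) (nsymm ne3) ⟨ne23.symm, fun hh => nv23 hh.symm⟩
            nc1 ⟨nece, hce⟩ nc2 (nsymm ne4) (nsymm nA24) ⟨ne12, nv12⟩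
        · exact absBanner hBanner a c d e v5 hac hcd hde hae.symm hav5
            ⟨nead, had⟩ ⟨nece, hce⟩ nc5 nd5 ne5
    · exact absP6 hP6 v4 v1 e b a v5 hA hev1.symm hbe.symm hab.symm hav5
        (nsymm ne4) (nsymm nb4) (nsymm na4) nA45 (nsymm nb1) (nsymm na1) nA15
        ⟨neae.symm, fun hh => hae hh.symm⟩ ne5 nb5
  -- v2 ∉ D
  have hv2n : v2 ∉ D := by
    intro h2
    have hb2 : b ∉ D := notinD hD h2 hbv2.symm
    have he2 : e ∉ D := notinD hD h2 hev2.symm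
    have hv3n : v3 ∉ D := notin_second hD hb2 h2 hbv2 ne23.symm hbv3
    have hv1n : v1 ∉ D := notin_second hD he2 h2 hev2 ne12 hev1
    obtain ⟨x, ⟨hxD, hxv3⟩, -⟩ := hD.2 v3 hv3n
    obtain ⟨y, ⟨hyD, hyv1⟩, -⟩ := hD.2 v1 hv1n
    have hx2 : x ≠ v2 := fun hh => nv23 (by rw [← hh]; exact hxv3.symm)
    have hy2 : y ≠ v2 := fun hh => nv12 (by rw [← hh]; exact hyv1)
    have nxv1 := ruleB h31 hxv3.symm
    have nyv3 := ruleB h13 hyv1.symm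
    have hxy : x ≠ y := fun hh => nxv1.2 (by rw [hh]; exact hyv1.symm)
    exact absP6 hP6 x v3 b e v1 y hxv3.symm hbv3.symm hbe hev1 hyv1
      ⟨fun hh => hb2 (by rw [← hh]; exact hxD),
        fun hh => nadj_dom hD hb2 h2 hbv2 hxD hx2 hh.symm⟩
      ⟨fun hh => he2 (by rw [← hh]; exact hxD),
        fun hh => nadj_dom hD he2 h2 hev2 hxD hx2 hh.symm⟩
      nxv1 ⟨hxy, hD.1 x hxD y hyD⟩ (nsymm ne3) (nsymm nA13) (nsymm nyv3) nb1
      ⟨fun hh => hb2 (by rw [hh]; exact hyD),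
        nadj_dom hD hb2 h2 hbv2 hyD hy2⟩
      ⟨fun hh => he2 (by rw [hh]; exact hyD),
        nadj_dom hD he2 h2 hev2 hyD hy2⟩
  -- v4 ∉ D
  have hv4n : v4 ∉ D := by
    intro h4
    have hc4 : c ∉ D := notinD hD h4 hcv4.symm
    have hd4 : d ∉ D := notinD hD h4 hdv4.symm
    have hv3n : v3 ∉ D := notin_second hD hc4 h4 hcv4 ne34 hcv3
    have hv1n : v1 ∉ D := notin_second hD hd4 h4 hdv4 ne41.symm hdv1
    obtain ⟨x, ⟨hxD, hxv3⟩, -⟩ := hD.2 v3 hv3n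
    obtain ⟨y, ⟨hyD, hyv1⟩, -⟩ := hD.2 v1 hv1n
    have hx4 : x ≠ v4 := fun hh => nv34 (by rw [← hh]; exact hxv3)
    have hy4 : y ≠ v4 := fun hh => nv41 (by rw [← hh]; exact hyv1.symm)
    have nxv1 := ruleB h31 hxv3.symm
    have nyv3 := ruleB h13 hyv1.symm
    have hxy : x ≠ y := fun hh => nxv1.2 (by rw [hh]; exact hyv1.symm)
    exact absP6 hP6 x v3 c d v1 y hxv3.symm hcv3.symm hcd hdv1 hyv1
      ⟨fun hh => hc4 (by rw [← hh]; exact hxD),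
        fun hh => nadj_dom hD hc4 h4 hcv4 hxD hx4 hh.symm⟩
      ⟨fun hh => hd4 (by rw [← hh]; exact hxD),
        fun hh => nadj_dom hD hd4 h4 hdv4 hxD hx4 hh.symm⟩
      nxv1 ⟨hxy, hD.1 x hxD y hyD⟩ (nsymm nd3) (nsymm nA13) (nsymm nyv3) nc1
      ⟨fun hh => hc4 (by rw [hh]; exact hyD),
        nadj_dom hD hc4 h4 hcv4 hyD hy4⟩
      ⟨fun hh => hd4 (by rw [hh]; exact hyD),
        nadj_dom hD hd4 h4 hdv4 hyD hy4⟩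
  -- b ∉ D
  have hbn : b ∉ D := by
    intro hb
    have han : a ∉ D := notinD hD hb hab.symm
    have hen : e ∉ D := notinD hD hb hbe
    have hv5n : v5 ∉ D := notin_second hD han hb hab nb5.1.symm hav5
    obtain ⟨w, ⟨hwD, hwv5⟩, -⟩ := hD.2 v5 hv5n
    have hwb : w ≠ b := fun hh => nb5.2 (by rw [← hh]; exact hwv5.symm)
    have nwv1 := ruleB h51 hwv5.symm
    by_cases hae : G.Adj a e
    · have hv1n : v1 ∉ D := notin_second hD hen hb hbe.symm nb1.1.symm hev1
      obtain ⟨y, ⟨hyD, hyv1⟩, -⟩ := hD.2 v1 hv1n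
      have hyb : y ≠ b := fun hh => nb1.2 (by rw [← hh]; exact hyv1.symm)
      have nyv5 := ruleB h15 hyv1.symm
      have hwy : w ≠ y := fun hh => nyv5.2 (by rw [← hh]; exact hwv5.symm)
      exact absP6 hP6 w v5 a e v1 y hwv5.symm hav5.symm hae hev1 hyv1
        ⟨fun hh => han (by rw [← hh]; exact hwD),
          fun hh => nadj_dom hD han hb hab hwD hwb hh.symm⟩
        ⟨fun hh => hen (by rw [← hh]; exact hwD),
          fun hh => nadj_dom hD hen hb hbe.symm hwD hwb hh.symm⟩
        nwv1 ⟨hwy, hD.1 w hwD y hyD⟩ (nsymm ne5) (nsymm nA15) (nsymm nyv5) na1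
        ⟨fun hh => han (by rw [hh]; exact hyD),
          nadj_dom hD han hb hab hyD hyb⟩
        ⟨fun hh => hen (by rw [hh]; exact hyD),
          nadj_dom hD hen hb hbe.symm hyD hyb⟩
    · exact absP6 hP6 w v5 a b e v1 hwv5.symm hav5.symm hab hbe hev1
        ⟨fun hh => han (by rw [← hh]; exact hwD),
          fun hh => nadj_dom hD han hb hab hwD hwb hh.symm⟩
        ⟨hwb, hD.1 w hwD b hb⟩
        ⟨fun hh => hen (by rw [← hh]; exact hwD),
          fun hh => nadj_dom hD hen hb hbe.symm hwD hwb hh.symm⟩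
        nwv1 (nsymm nb5) (nsymm ne5) (nsymm nA15) ⟨neae, hae⟩ na1 nb1
  -- c ∉ D
  have hcn : c ∉ D := by
    intro hc
    have han : a ∉ D := notinD hD hc hac.symm
    have hdn : d ∉ D := notinD hD hc hcd
    have hv5n : v5 ∉ D := notin_second hD han hc hac nc5.1.symm hav5
    obtain ⟨w, ⟨hwD, hwv5⟩, -⟩ := hD.2 v5 hv5n
    have hwc : w ≠ c := fun hh => nc5.2 (by rw [← hh]; exact hwv5.symm)
    have nwv1 := ruleB h51 hwv5.symm
    by_cases had : G.Adj a d
    · have hv1n : v1 ∉ D := notin_second hD hdn hc hcd.symm nc1.1.symm hdv1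
      obtain ⟨y, ⟨hyD, hyv1⟩, -⟩ := hD.2 v1 hv1n
      have hyc : y ≠ c := fun hh => nc1.2 (by rw [← hh]; exact hyv1.symm)
      have nyv5 := ruleB h15 hyv1.symm
      have hwy : w ≠ y := fun hh => nyv5.2 (by rw [← hh]; exact hwv5.symm)
      exact absP6 hP6 w v5 a d v1 y hwv5.symm hav5.symm had hdv1 hyv1
        ⟨fun hh => han (by rw [← hh]; exact hwD),
          fun hh => nadj_dom hD han hc hac hwD hwc hh.symm⟩
        ⟨fun hh => hdn (by rw [← hh]; exact hwD),
          fun hh => nadj_dom hD hdn hc hcd.symm hwD hwc hh.symm⟩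
        nwv1 ⟨hwy, hD.1 w hwD y hyD⟩ (nsymm nd5) (nsymm nA15) (nsymm nyv5) na1
        ⟨fun hh => han (by rw [hh]; exact hyD),
          nadj_dom hD han hc hac hyD hyc⟩
        ⟨fun hh => hdn (by rw [hh]; exact hyD),
          nadj_dom hD hdn hc hcd.symm hyD hyc⟩
    · exact absP6 hP6 w v5 a c d v1 hwv5.symm hav5.symm hac hcd hdv1
        ⟨fun hh => han (by rw [← hh]; exact hwD),
          fun hh => nadj_dom hD han hc hac hwD hwc hh.symm⟩
        ⟨hwc, hD.1 w hwD c hc⟩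
        ⟨fun hh => hdn (by rw [← hh]; exact hwD),
          fun hh => nadj_dom hD hdn hc hcd.symm hwD hwc hh.symm⟩
        nwv1 (nsymm nc5) (nsymm nd5) (nsymm nA15) ⟨nead, had⟩ na1 nc1
  -- d ∉ D
  have hdn : d ∉ D := by
    intro hd
    have hen : e ∉ D := notinD hD hd hde
    have hv4d : v4 ∉ D := hv4n
    have hv3n : v3 ∉ D := notin_second hD hcn hd hcd nd3.1.symm hcv3
    obtain ⟨x, ⟨hxD, hxv3⟩, -⟩ := hD.2 v3 hv3n
    have hxd : x ≠ d := fun hh => nd3.2 (by rw [← hh]; exact hxv3.symm)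
    by_cases hxv2 : G.Adj x v2
    · exact absP6 hP6 v4 d e v2 x v3 hdv4.symm hde hev2 hxv2.symm hxv3.symm
        (nsymm ne4) (nsymm nA24)
        ⟨fun hh => hv4d (by rw [hh]; exact hxD),
          fun hh => nadj_dom hD hv4d hd hdv4.symm hxD hxd hh⟩
        ⟨ne34.symm, fun hh => nv34 hh.symm⟩
        nd2 ⟨fun hh => hxd hh.symm, hD.1 d hd x hxD⟩ nd3
        ⟨fun hh => hen (by rw [hh]; exact hxD),
          fun hh => nadj_dom hD hen hd hde.symm hxD hxd hh⟩
        ne3 ⟨ne23, nv23⟩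
    · obtain ⟨t, ⟨htD, htv2⟩, -⟩ := hD.2 v2 hv2n
      have hxt : x ≠ t := fun hh => hxv2 (by rw [hh]; exact htv2.symm)
      have htd : t ≠ d := fun hh => nd2.2 (by rw [← hh]; exact htv2.symm)
      have ntv3 : ¬G.Adj v3 t := nadj_dom hD hv3n hxD hxv3 htD (fun hh => hxt hh.symm)
      by_cases hce : G.Adj c e
      · exact absP6 hP6 x v3 c e v2 t hxv3.symm hcv3.symm hce hev2 htv2
          ⟨fun hh => hcn (by rw [← hh]; exact hxD),
            fun hh => nadj_dom hD hcn hd hcd hxD hxd hh.symm⟩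
          ⟨fun hh => hen (by rw [← hh]; exact hxD),
            fun hh => nadj_dom hD hen hd hde.symm hxD hxd hh.symm⟩
          ⟨fun hh => nv23 (by rw [← hh]; exact hxv3.symm), hxv2⟩
          ⟨hxt, hD.1 x hxD t htD⟩
          (nsymm ne3) ⟨ne23.symm, fun hh => nv23 hh.symm⟩
          ⟨fun hh => hv3n (by rw [hh]; exact htD), ntv3⟩
          nc2
          ⟨fun hh => hcn (by rw [hh]; exact htD),
            nadj_dom hD hcn hd hcd htD htd⟩
          ⟨fun hh => hen (by rw [hh]; exact htD),
            nadj_dom hD hen hd hde.symm htD htd⟩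
      · exact absP6 hP6 t v2 e d c v3 htv2.symm hev2.symm hde.symm hcd.symm hcv3
          ⟨fun hh => hen (by rw [← hh]; exact htD),
            fun hh => nadj_dom hD hen hd hde.symm htD htd hh.symm⟩
          ⟨htd, hD.1 t htD d hd⟩
          ⟨fun hh => hcn (by rw [← hh]; exact htD),
            fun hh => nadj_dom hD hcn hd hcd htD htd hh.symm⟩
          ⟨fun hh => hv3n (by rw [← hh]; exact htD), fun hh => ntv3 hh.symm⟩
          (nsymm nd2) (nsymm nc2) ⟨ne23, nv23⟩
          ⟨nece.symm, fun hh => hce hh.symm⟩ ne3 nd3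
  -- e ∉ D
  have hen : e ∉ D := by
    intro he
    have hdn' : d ∉ D := notinD hD he hde.symm
    have hv2e : v2 ∉ D := hv2n
    have hv3n : v3 ∉ D := notin_second hD hbn he hbe ne3.1.symm hbv3
    obtain ⟨x, ⟨hxD, hxv3⟩, -⟩ := hD.2 v3 hv3n
    have hxe : x ≠ e := fun hh => ne3.2 (by rw [← hh]; exact hxv3.symm)
    by_cases hxv4 : G.Adj x v4
    · exact absP6 hP6 v2 e d v4 x v3 hev2.symm hde.symm hdv4 hxv4.symm hxv3.symm
        (nsymm nd2) nA24
        ⟨fun hh => hv2e (by rw [hh]; exact hxD),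
          fun hh => nadj_dom hD hv2e he hev2.symm hxD hxe hh⟩
        ⟨ne23, nv23⟩
        ne4 ⟨fun hh => hxe hh.symm, hD.1 e he x hxD⟩ ne3
        ⟨fun hh => hdn' (by rw [hh]; exact hxD),
          fun hh => nadj_dom hD hdn' he hde hxD hxe hh⟩
        nd3 ⟨ne34.symm, fun hh => nv34 hh.symm⟩
    · obtain ⟨t, ⟨htD, htv4⟩, -⟩ := hD.2 v4 hv4n
      have hxt : x ≠ t := fun hh => hxv4 (by rw [hh]; exact htv4.symm)
      have hte : t ≠ e := fun hh => ne4.2 (by rw [← hh]; exact htv4.symm)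
      have ntv3 : ¬G.Adj v3 t := nadj_dom hD hv3n hxD hxv3 htD (fun hh => hxt hh.symm)
      by_cases hbd : G.Adj b d
      · exact absP6 hP6 x v3 b d v4 t hxv3.symm hbv3.symm hbd hdv4 htv4
          ⟨fun hh => hbn (by rw [← hh]; exact hxD),
            fun hh => nadj_dom hD hbn he hbe hxD hxe hh.symm⟩
          ⟨fun hh => hdn' (by rw [← hh]; exact hxD),
            fun hh => nadj_dom hD hdn' he hde hxD hxe hh.symm⟩
          ⟨fun hh => nv34 (by rw [← hh]; exact hxv3), hxv4⟩
          ⟨hxt, hD.1 x hxD t htD⟩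
          (nsymm nd3) ⟨ne34, nv34⟩
          ⟨fun hh => hv3n (by rw [hh]; exact htD), ntv3⟩
          nb4
          ⟨fun hh => hbn (by rw [hh]; exact htD),
            nadj_dom hD hbn he hbe htD hte⟩
          ⟨fun hh => hdn' (by rw [hh]; exact htD),
            nadj_dom hD hdn' he hde htD hte⟩
      · exact absP6 hP6 t v4 d e b v3 htv4.symm hdv4.symm hde hbe.symm hbv3
          ⟨fun hh => hdn' (by rw [← hh]; exact htD),
            fun hh => nadj_dom hD hdn' he hde htD hte hh.symm⟩
          ⟨hte, hD.1 t htD e he⟩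
          ⟨fun hh => hbn (by rw [← hh]; exact htD),
            fun hh => nadj_dom hD hbn he hbe htD hte hh.symm⟩
          ⟨fun hh => hv3n (by rw [← hh]; exact htD), fun hh => ntv3 hh.symm⟩
          (nsymm ne4) (nsymm nb4) ⟨ne34.symm, fun hh => nv34 hh.symm⟩
          ⟨nebd.symm, fun hh => hbd hh.symm⟩ nd3 ne3
  exact ⟨hv2n, hv4n, hbn, hcn, hdn, hen⟩
end

section
/- Under the Case 2 configuration of the banner-in-square setting, if additionally ac, ab, bc, cd, de, be are edges of G and v2', v4' are distinct vertices of D with v2'v2 and v4'v4 edges of G, then v1 does not belong to D. -/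
namespace BannerAux

variable {V : Type*} {G : SimpleGraph V}

lemma nsymm {x y : V} (h : x ≠ y ∧ ¬ G.Adj x y) : y ≠ x ∧ ¬ G.Adj y x :=
  ⟨h.1.symm, fun hA => h.2 hA.symm⟩

lemma far_not_adj {u w : V} (h : 3 ≤ G.edist u w) : u ≠ w ∧ ¬ G.Adj u w := by
  constructor
  · rintro rfl
    rw [SimpleGraph.edist_self] at h
    exact absurd h (by norm_num)
  · intro hA
    rw [← SimpleGraph.edist_eq_one_iff_adj] at hA
    rw [hA] at h
    exact absurd h (by norm_num)

lemma far_mid {u w z : V} (h : 3 ≤ G.edist u w) (hz : G.Adj z w) : u ≠ z ∧ ¬ G.Adj u z := by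
  have hzw : G.edist z w = 1 := SimpleGraph.edist_eq_one_iff_adj.mpr hz
  constructor
  · rintro rfl
    exact (far_not_adj h).2 hz
  · intro hA
    have huz : G.edist u z = 1 := SimpleGraph.edist_eq_one_iff_adj.mpr hA
    have ht := SimpleGraph.edist_triangle (G := G) (u := u) (v := z) (w := w)
    rw [huz, hzw] at ht
    have h2 : G.edist u w ≤ 2 := ht.trans (by norm_num)
    exact absurd (h.trans h2) (by norm_num)

lemma mkP6 (hP6 : IsInducedFree (SimpleGraph.pathGraph 6) G) (x0 x1 x2 x3 x4 x5 : V)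
    (e01 : G.Adj x0 x1) (e12 : G.Adj x1 x2) (e23 : G.Adj x2 x3) (e34 : G.Adj x3 x4)
    (e45 : G.Adj x4 x5)
    (h02 : x0 ≠ x2 ∧ ¬ G.Adj x0 x2) (h03 : x0 ≠ x3 ∧ ¬ G.Adj x0 x3)
    (h04 : x0 ≠ x4 ∧ ¬ G.Adj x0 x4) (h05 : x0 ≠ x5 ∧ ¬ G.Adj x0 x5)
    (h13 : x1 ≠ x3 ∧ ¬ G.Adj x1 x3) (h14 : x1 ≠ x4 ∧ ¬ G.Adj x1 x4)
    (h15 : x1 ≠ x5 ∧ ¬ G.Adj x1 x5) (h24 : x2 ≠ x4 ∧ ¬ G.Adj x2 x4)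
    (h25 : x2 ≠ x5 ∧ ¬ G.Adj x2 x5) (h35 : x3 ≠ x5 ∧ ¬ G.Adj x3 x5) : False := by
  have hP6' : IsEmpty (SimpleGraph.pathGraph 6 ↪g G) := hP6
  refine hP6'.false (⟨⟨fun i => i.val.casesOn x0 (fun k => k.casesOn x1 (fun k => k.casesOn x2
      (fun k => k.casesOn x3 (fun k => k.casesOn x4 fun _ => x5)))), ?_⟩, ?_⟩)
  · intro i j hij
    fin_cases i <;> fin_cases j <;> simp only at hij ⊢ <;>
      first
        | rfl
        | exact absurd hij (by
            first
              | exact e01.ne | exact e01.ne' | exact e12.ne | exact e12.ne'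
              | exact e23.ne | exact e23.ne' | exact e34.ne | exact e34.ne'
              | exact e45.ne | exact e45.ne'
              | exact h02.1 | exact h02.1.symm | exact h03.1 | exact h03.1.symm
              | exact h04.1 | exact h04.1.symm | exact h05.1 | exact h05.1.symm
              | exact h13.1 | exact h13.1.symm | exact h14.1 | exact h14.1.symm
              | exact h15.1 | exact h15.1.symm | exact h24.1 | exact h24.1.symm
              | exact h25.1 | exact h25.1.symm | exact h35.1 | exact h35.1.symm)
  · intro i j
    rw [SimpleGraph.pathGraph_adj]
    fin_cases i <;> fin_cases j <;> simp only <;>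
      first
        | (refine iff_of_true ?_ (by decide)) <;>
            first
              | exact e01 | exact e01.symm | exact e12 | exact e12.symm
              | exact e23 | exact e23.symm | exact e34 | exact e34.symm
              | exact e45 | exact e45.symm
        | (refine iff_of_false ?_ (by decide)) <;>
            first
              | exact G.irrefl
              | exact h02.2 | exact fun h => h02.2 h.symm
              | exact h03.2 | exact fun h => h03.2 h.symm
              | exact h04.2 | exact fun h => h04.2 h.symm
              | exact h05.2 | exact fun h => h05.2 h.symm
              | exact h13.2 | exact fun h => h13.2 h.symm
              | exact h14.2 | exact fun h => h14.2 h.symm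
              | exact h15.2 | exact fun h => h15.2 h.symm
              | exact h24.2 | exact fun h => h24.2 h.symm
              | exact h25.2 | exact fun h => h25.2 h.symm
              | exact h35.2 | exact fun h => h35.2 h.symm

lemma banner_adj (i j : Fin 5) : banner.Adj i j ↔
    (s(i,j) = s(0,1) ∨ s(i,j) = s(1,2) ∨ s(i,j) = s(2,3) ∨ s(i,j) = s(3,0) ∨ s(i,j) = s(0,4))
      ∧ i ≠ j := by
  simp [banner, SimpleGraph.fromEdgeSet_adj, Set.mem_insert_iff, Set.mem_singleton_iff]

/-- Build a contradiction from an induced banner: 4-cycle `x0-x1-x2-x3-x0` with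
pendant `x4` attached at `x0`. -/
lemma mkBanner (hB : IsInducedFree banner G) (x0 x1 x2 x3 x4 : V)
    (e01 : G.Adj x0 x1) (e12 : G.Adj x1 x2) (e23 : G.Adj x2 x3) (e30 : G.Adj x3 x0)
    (e04 : G.Adj x0 x4)
    (h02 : x0 ≠ x2 ∧ ¬ G.Adj x0 x2) (h13 : x1 ≠ x3 ∧ ¬ G.Adj x1 x3)
    (h14 : x1 ≠ x4 ∧ ¬ G.Adj x1 x4) (h24 : x2 ≠ x4 ∧ ¬ G.Adj x2 x4)
    (h34 : x3 ≠ x4 ∧ ¬ G.Adj x3 x4) : False := by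
  have hB' : IsEmpty (banner ↪g G) := hB
  refine hB'.false (⟨⟨fun i => i.val.casesOn x0 (fun k => k.casesOn x1 (fun k => k.casesOn x2
      (fun k => k.casesOn x3 fun _ => x4))), ?_⟩, ?_⟩)
  · intro i j hij
    fin_cases i <;> fin_cases j <;> simp only at hij ⊢ <;>
      first
        | rfl
        | exact absurd hij (by
            first
              | exact e01.ne | exact e01.ne' | exact e12.ne | exact e12.ne'
              | exact e23.ne | exact e23.ne' | exact e30.ne | exact e30.ne'
              | exact e04.ne | exact e04.ne'
              | exact h02.1 | exact h02.1.symm | exact h13.1 | exact h13.1.symm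
              | exact h14.1 | exact h14.1.symm | exact h24.1 | exact h24.1.symm
              | exact h34.1 | exact h34.1.symm)
  · intro i j
    rw [banner_adj]
    fin_cases i <;> fin_cases j <;> simp only <;>
      first
        | (refine iff_of_true ?_ (by decide)) <;>
            first
              | exact e01 | exact e01.symm | exact e12 | exact e12.symm
              | exact e23 | exact e23.symm | exact e30 | exact e30.symm
              | exact e04 | exact e04.symm
        | (refine iff_of_false ?_ (by decide)) <;>
            first
              | exact G.irrefl
              | exact h02.2 | exact fun h => h02.2 h.symm
              | exact h13.2 | exact fun h => h13.2 h.symm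
              | exact h14.2 | exact fun h => h14.2 h.symm
              | exact h24.2 | exact fun h => h24.2 h.symm
              | exact h34.2 | exact fun h => h34.2 h.symm

/-- The key configuration lemma: in the Case 2 configuration, if `v1 ∈ D`,
`v1` is adjacent to `v2`, and some `q ∈ D` with `q ≠ v1` is adjacent to `v4`,
then we get a contradiction. -/
lemma case_adj (hP6 : IsInducedFree (SimpleGraph.pathGraph 6) G)
    (hBanner : IsInducedFree banner G)
    (D : Set V) (hD : G.IsEfficientDominatingSet D)
    (v1 v2 v3 v4 v5 a b c d q : V)
    (h13 : 3 ≤ G.edist v1 v3) (h15 : 3 ≤ G.edist v1 v5)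
    (h24 : 3 ≤ G.edist v2 v4) (h25 : 3 ≤ G.edist v2 v5) (h45 : 3 ≤ G.edist v4 v5)
    (h35 : v3 ≠ v5 ∧ ¬ G.Adj v3 v5)
    (hav3 : G.Adj a v3) (hav5 : G.Adj a v5) (hbv2 : G.Adj b v2) (hbv3 : G.Adj b v3)
    (hcv3 : G.Adj c v3) (hcv4 : G.Adj c v4) (hdv1 : G.Adj d v1) (hdv4 : G.Adj d v4)
    (hac : G.Adj a c) (hcd : G.Adj c d)
    (hv1v2 : G.Adj v1 v2)
    (hv1D : v1 ∈ D) (hqD : q ∈ D) (hqne : q ≠ v1) (hqv4 : G.Adj q v4) : False := by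
  have h31 : 3 ≤ G.edist v3 v1 := by rwa [SimpleGraph.edist_comm] at h13
  have h51 : 3 ≤ G.edist v5 v1 := by rwa [SimpleGraph.edist_comm] at h15
  have h42 : 3 ≤ G.edist v4 v2 := by rwa [SimpleGraph.edist_comm] at h24
  have h54 : 3 ≤ G.edist v5 v4 := by rwa [SimpleGraph.edist_comm] at h45
  have n_v1_b := far_mid h13 hbv3
  have n_v2_d := far_mid h24 hdv4
  have n_v3_d := far_mid h31 hdv1
  have n_v1_v3 := far_not_adj h13
  have n_v3_v2 := far_mid h31 hv1v2.symm
  have n_v4_a := far_mid h45 hav5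
  have n_v5_d := far_mid h51 hdv1
  have n_v4_v5 := far_not_adj h45
  have n_v4_b := far_mid h42 hbv2
  have n_v2_v4 := far_not_adj h24
  have n_v1_c := far_mid h13 hcv3
  have n_v2_c := far_mid h24 hcv4
  have n_v2_a := far_mid h25 hav5
  have n_v2_v5 := far_not_adj h25
  have n_v1_a := far_mid h13 hav3
  have n_v1_v5 := far_not_adj h15
  have n_v5_c := far_mid h54 hcv4
  have hv4nD : v4 ∉ D := fun h => hD.1 q hqD v4 h hqv4
  have n_v1_v4 : v1 ≠ v4 ∧ ¬ G.Adj v1 v4 := by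
    constructor
    · rintro rfl
      exact hv4nD hv1D
    · intro hA
      obtain ⟨u, -, hu⟩ := hD.2 v4 hv4nD
      exact hqne ((hu q ⟨hqD, hqv4.symm⟩).trans (hu v1 ⟨hv1D, hA.symm⟩).symm)
  by_cases hbd : G.Adj b d
  · -- banner: cycle b-d-v1-v2-b with pendant v3 at b
    exact mkBanner hBanner b d v1 v2 v3 hbd hdv1 hv1v2 hbv2.symm hbv3
      (nsymm n_v1_b) (nsymm n_v2_d) (nsymm n_v3_d) n_v1_v3 (nsymm n_v3_v2)
  · by_cases had : G.Adj a d
    · by_cases h34adj : G.Adj v3 v4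
      · -- banner: cycle a-d-v4-v3-a with pendant v5 at a
        exact mkBanner hBanner a d v4 v3 v5 had hdv4 h34adj.symm hav3.symm hav5
          (nsymm n_v4_a) (nsymm n_v3_d) (nsymm n_v5_d) n_v4_v5 h35
      · -- P6: v3-b-v2-v1-d-v4
        have ne34 : v3 ≠ v4 := by
          rintro rfl
          exact n_v4_b.2 hbv3.symm
        have nebd : b ≠ d := by
          rintro rfl
          exact n_v2_d.2 hbv2.symm
        exact mkP6 hP6 v3 b v2 v1 d v4 hbv3.symm hbv2 hv1v2.symm hdv1.symm hdv4
          n_v3_v2 (nsymm n_v1_v3) n_v3_d ⟨ne34, h34adj⟩ (nsymm n_v1_b) ⟨nebd, hbd⟩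
          (nsymm n_v4_b) n_v2_d n_v2_v4 n_v1_v4
    · -- P6: v2-v1-d-c-a-v5
      have neda : d ≠ a := by
        rintro rfl
        exact n_v5_d.2 hav5.symm
      exact mkP6 hP6 v2 v1 d c a v5 hv1v2.symm hdv1.symm hcd.symm hac.symm hav5
        n_v2_d n_v2_c n_v2_a n_v2_v5 n_v1_c n_v1_a n_v1_v5
        ⟨neda, fun h => had h.symm⟩ (nsymm n_v5_d) (nsymm n_v5_c)

end BannerAux

theorem banner_case2_v1_notin_D {V : Type*} [Fintype V] (G : SimpleGraph V)
    (hP6 : IsInducedFree (SimpleGraph.pathGraph 6) G)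
    (hBanner : IsInducedFree banner G)
    (D : Set V) (hD : G.IsEfficientDominatingSet D)
    (v1 v2 v3 v4 v5 : V)
    (h12 : G.edist v1 v2 ≤ 2) (h23 : G.edist v2 v3 ≤ 2) (h34 : G.edist v3 v4 ≤ 2)
    (h41 : G.edist v4 v1 ≤ 2) (h35 : G.edist v3 v5 ≤ 2)
    (h13 : 3 ≤ G.edist v1 v3) (h15 : 3 ≤ G.edist v1 v5) (h24 : 3 ≤ G.edist v2 v4)
    (h25 : 3 ≤ G.edist v2 v5) (h45 : 3 ≤ G.edist v4 v5)
    (hdist35 : G.edist v3 v5 = 2)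
    (a b c d e : V)
    (hav3 : G.Adj a v3) (hav5 : G.Adj a v5) (hbv2 : G.Adj b v2) (hbv3 : G.Adj b v3)
    (hcv3 : G.Adj c v3) (hcv4 : G.Adj c v4) (hdv1 : G.Adj d v1) (hdv4 : G.Adj d v4)
    (hev1 : G.Adj e v1) (hev2 : G.Adj e v2)
    (hac : G.Adj a c) (hab : G.Adj a b) (hbc : G.Adj b c) (hcd : G.Adj c d)
    (hde : G.Adj d e) (hbe : G.Adj b e)
    (v2' v4' : V) (hne : v2' ≠ v4') (hv2'D : v2' ∈ D) (hv4'D : v4' ∈ D)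
    (hv2'v2 : G.Adj v2' v2) (hv4'v4 : G.Adj v4' v4)
    : v1 ∉ D := by
  intro hv1D
  have h35p : v3 ≠ v5 ∧ ¬ G.Adj v3 v5 := by
    constructor
    · rintro rfl
      rw [SimpleGraph.edist_self] at hdist35
      exact absurd hdist35 (by norm_num)
    · intro hA
      rw [← SimpleGraph.edist_eq_one_iff_adj] at hA
      rw [hA] at hdist35
      exact absurd hdist35 (by norm_num)
  have h42 : 3 ≤ G.edist v4 v2 := by rwa [SimpleGraph.edist_comm] at h24
  by_cases h2eq : v2' = v1
  · -- v2' = v1, so v1 is adjacent to v2; note v4' ≠ v1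
    have hv1v2 : G.Adj v1 v2 := by rw [← h2eq]; exact hv2'v2
    have hqne : v4' ≠ v1 := by
      rintro rfl
      exact hne h2eq
    exact BannerAux.case_adj hP6 hBanner D hD v1 v2 v3 v4 v5 a b c d v4'
      h13 h15 h24 h25 h45 h35p hav3 hav5 hbv2 hbv3 hcv3 hcv4 hdv1 hdv4 hac hcd
      hv1v2 hv1D hv4'D hqne hv4'v4
  · by_cases h4eq : v4' = v1
    · -- v4' = v1, so v1 is adjacent to v4; apply the lemma with roles swapped
      have hv1v4 : G.Adj v1 v4 := by rw [← h4eq]; exact hv4'v4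
      exact BannerAux.case_adj hP6 hBanner D hD v1 v4 v3 v2 v5 a c b e v2'
        h13 h15 h42 h45 h25 h35p hav3 hav5 hcv4 hcv3 hbv3 hbv2 hev1 hev2 hab hbe
        hv1v4 hv1D hv2'D h2eq hv2'v2
    · -- v2' ≠ v1 and v4' ≠ v1 : P6 v4'-v4-d-e-v2-v2'
      have hv2nD : v2 ∉ D := fun h => hD.1 v2' hv2'D v2 h hv2'v2
      have hv4nD : v4 ∉ D := fun h => hD.1 v4' hv4'D v4 h hv4'v4
      have hdnD : d ∉ D := fun h => hD.1 v1 hv1D d h hdv1.symm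
      have henD : e ∉ D := fun h => hD.1 v1 hv1D e h hev1.symm
      have uniq_d : ∀ u, u ∈ D → G.Adj d u → u = v1 := by
        intro u huD hA
        obtain ⟨w, -, hw⟩ := hD.2 d hdnD
        exact (hw u ⟨huD, hA⟩).trans (hw v1 ⟨hv1D, hdv1⟩).symm
      have uniq_e : ∀ u, u ∈ D → G.Adj e u → u = v1 := by
        intro u huD hA
        obtain ⟨w, -, hw⟩ := hD.2 e henD
        exact (hw u ⟨huD, hA⟩).trans (hw v1 ⟨hv1D, hev1⟩).symm
      have uniq_v2 : ∀ u, u ∈ D → G.Adj v2 u → u = v2' := by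
        intro u huD hA
        obtain ⟨w, -, hw⟩ := hD.2 v2 hv2nD
        exact (hw u ⟨huD, hA⟩).trans (hw v2' ⟨hv2'D, hv2'v2.symm⟩).symm
      have uniq_v4 : ∀ u, u ∈ D → G.Adj v4 u → u = v4' := by
        intro u huD hA
        obtain ⟨w, -, hw⟩ := hD.2 v4 hv4nD
        exact (hw u ⟨huD, hA⟩).trans (hw v4' ⟨hv4'D, hv4'v4.symm⟩).symm
      refine BannerAux.mkP6 hP6 v4' v4 d e v2 v2' hv4'v4 hdv4.symm hde hev2 hv2'v2.symm
        ⟨?_, ?_⟩ ⟨?_, ?_⟩ ⟨?_, ?_⟩ ⟨hne.symm, fun hA => hD.1 v4' hv4'D v2' hv2'D hA⟩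
        (BannerAux.far_mid h42 hev2) (BannerAux.far_not_adj h42) ⟨?_, ?_⟩
        (BannerAux.nsymm (BannerAux.far_mid h24 hdv4)) ⟨?_, ?_⟩ ⟨?_, ?_⟩
      · rintro rfl; exact hdnD hv4'D
      · intro hA; exact h4eq (uniq_d v4' hv4'D hA.symm)
      · rintro rfl; exact henD hv4'D
      · intro hA; exact h4eq (uniq_e v4' hv4'D hA.symm)
      · rintro rfl; exact hv2nD hv4'D
      · intro hA; exact hne (uniq_v2 v4' hv4'D hA.symm).symm
      · rintro rfl; exact hv4nD hv2'D
      · intro hA; exact hne (uniq_v4 v2' hv2'D hA)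
      · rintro rfl; exact hdnD hv2'D
      · intro hA; exact h2eq (uniq_d v2' hv2'D hA)
      · rintro rfl; exact henD hv2'D
      · intro hA; exact h2eq (uniq_e v2' hv2'D hA)
end
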